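/- arXiv:math/0211041 — 3 statements merged into one kernel-verified Lean document; each statement's English description precedes it below -/
import Mathlib

section
/- Let Γ ⊆ SL(2,ℝ) be a convex co-compact classical Schottky group with limit set Λ(Γ) of Hausdorff dimension δ, and let Z : ℂ → ℂ be an entire function agreeing with the Selberg zeta function Z_Γ(s) for Re s > 1 and satisfying, for every C₀ > 0, a bound |Z(s)| ≤ C₁·exp(C₁·|s|^δ) on the strip |Re s| < C₀. Then for every C₀ > 0 there exists a constant C₁ > 0 such that for every real r > 1, the number of zeros s of Z, counted with multiplicity (the order of vanishing of Z at s), satisfying r ≤ |Im s| ≤ r+1 and Re s > −C₀, is at most C₁·r^δ. -/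
open Matrix

/-- `SL(2,ℝ)`. -/
abbrev SL2R := Matrix.SpecialLinearGroup (Fin 2) ℝ

/-- Möbius action of an element of `SL(2,ℝ)` on `ℝ`. -/
noncomputable def mobiusR (g : SL2R) (x : ℝ) : ℝ :=
  (g 0 0 * x + g 0 1) / (g 1 0 * x + g 1 1)

/-- Möbius action of an element of `SL(2,ℝ)` on `ℂ`. -/
noncomputable def mobiusC (g : SL2R) (z : ℂ) : ℂ :=
  ((g 0 0 : ℝ) * z + (g 0 1 : ℝ)) / ((g 1 0 : ℝ) * z + (g 1 1 : ℝ))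

/-- Möbius action of an element of `SL(2,ℝ)` on `ℝ ∪ {∞}`. -/
noncomputable def mobiusOP (g : SL2R) : OnePoint ℝ → OnePoint ℝ := fun p =>
  Option.elim p
    (if g 1 0 = 0 then (OnePoint.infty : OnePoint ℝ) else ((g 0 0 / g 1 0 : ℝ) : OnePoint ℝ))
    (fun x => if g 1 0 * x + g 1 1 = 0 then (OnePoint.infty : OnePoint ℝ)
      else ((mobiusR g x : ℝ) : OnePoint ℝ))

/-- The data of a convex co-compact classical Schottky group: `2ℓ` pairwise disjoint
nonempty closed bounded intervals `I i = [a i, b i]`, indexed by `Fin l ⊕ Fin l`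
(`inl i` plays the role of `I_i` and `inr i` that of `I_{ℓ+i}`), together with
generators `gen i` sending the complement in `ℝ ∪ {∞}` of the interior of `I (inl i)`
onto `I (inr i)`. -/
structure SchottkyData (l : ℕ) where
  two_le : 2 ≤ l
  a : Fin l ⊕ Fin l → ℝ
  b : Fin l ⊕ Fin l → ℝ
  le : ∀ i, a i ≤ b i
  disjoint : Pairwise fun i j => Disjoint (Set.Icc (a i) (b i)) (Set.Icc (a j) (b j))
  gen : Fin l → SL2R
  maps_onto : ∀ i : Fin l,
    mobiusOP (gen i) '' ((fun x : ℝ => (x : OnePoint ℝ)) '' Set.Ioo (a (.inl i)) (b (.inl i)))ᶜ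
      = (fun x : ℝ => (x : OnePoint ℝ)) '' Set.Icc (a (.inr i)) (b (.inr i))

/-- The Schottky group: the subgroup of `SL(2,ℝ)` generated by `γ₁, …, γ_ℓ`
(it automatically contains the `γ_{ℓ+i} = γ_i⁻¹`). -/
def SchottkyData.group {l : ℕ} (S : SchottkyData l) : Subgroup SL2R :=
  Subgroup.closure (Set.range S.gen)

/-- The limit set: the set of real points that are accumulation points in `ℂ` of the
orbit `{γ · i : γ ∈ Γ}` of the point `i` of the upper half-plane, i.e. cluster points
of that orbit along the cofinite filter on `Γ`. -/
noncomputable def SchottkyData.limitSet {l : ℕ} (S : SchottkyData l) : Set ℝ :=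
  {x : ℝ | MapClusterPt (x : ℂ) (Filter.cofinite : Filter S.group)
    (fun γ => mobiusC (γ : SL2R) Complex.I)}

/-- The Hausdorff dimension `δ` of the limit set, as a real number. -/
noncomputable def SchottkyData.dimLimitSet {l : ℕ} (S : SchottkyData l) : ℝ :=
  (dimH S.limitSet).toReal

/-- Inverse hyperbolic cosine. -/
noncomputable def arcosh (x : ℝ) : ℝ := Real.log (x + Real.sqrt (x ^ 2 - 1))

/-- The translation length `ℓ(γ) = 2 arcosh(|tr γ|/2)` of a hyperbolic element. -/
noncomputable def transLength (g : SL2R) : ℝ :=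
  2 * arcosh (|Matrix.trace (g : Matrix (Fin 2) (Fin 2) ℝ)| / 2)

/-- An element of a group is primitive if it is nontrivial and not a proper power. -/
def IsPrimitiveElt {G : Type*} [Monoid G] (γ : G) : Prop :=
  γ ≠ 1 ∧ ∀ (β : G) (k : ℕ), 2 ≤ k → γ ≠ β ^ k

/-- A choice of representative of a conjugacy class. -/
noncomputable def ConjClasses.rep {G : Type*} [Monoid G] (c : ConjClasses G) : G :=
  (ConjClasses.exists_rep c).choose

/-- The conjugacy classes of primitive elements of the Schottky group. -/
def SchottkyData.PrimClasses {l : ℕ} (S : SchottkyData l) : Type _ :=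
  {c : ConjClasses S.group // IsPrimitiveElt c.rep}

/-- The factor `1 - e^{-(s+k) ℓ(γ)}` of the Selberg zeta function, for a conjugacy
class `{γ}` of primitive elements and `k ∈ ℕ`. -/
noncomputable def SchottkyData.zetaFactor {l : ℕ} (S : SchottkyData l) (s : ℂ)
    (c : S.PrimClasses) (k : ℕ) : ℂ :=
  1 - Complex.exp (-(s + (k : ℂ)) * (transLength ((c.1.rep : S.group) : SL2R) : ℂ))

/-- The Selberg zeta function `Z_Γ(s) = ∏_{{γ}} ∏_{k=0}^∞ (1 - e^{-(s+k) ℓ(γ)})` of the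
Schottky group, as a double infinite product (`tprod`). -/
noncomputable def SchottkyData.selbergZeta {l : ℕ} (S : SchottkyData l) (s : ℂ) : ℂ :=
  ∏' c : S.PrimClasses, ∏' k : ℕ, S.zetaFactor s c k

/-!
Zeros are counted with Jensen's formula on the discs of radius `ρ` centred at `A ± i(r + 1/2)`,
where `A` is so large that `‖Z‖ ≥ 1/2` on `Re s ≥ A`: the growth bound on the concentric circle of
radius `2ρ` allows at most `O(r^δ)` zeros in each disc.

The lower bound comes from the Euler product. At a real point `A₀ > 1` with `Z_Γ(A₀) ≠ 0` all
factors are real and lie in `[0, 1]`, so the partial products decrease to `Z_Γ(A₀) > 0`; this forces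
`∑_{γ,k} e^{-(A₀+k)ℓ(γ)} < ∞`, and by dominated convergence `Z_Γ(s) → 1` uniformly as
`Re s → ∞`. If instead `Z` vanishes on `(1, ∞)`, it vanishes identically, every order of vanishing
is `⊤`, and `ENat.toNat ⊤ = 0`.
-/

open Filter Topology Function Finset

section InfiniteProducts

variable {ι κ R : Type*}

lemma norm_prod_sub_one_le_exp_sum_sub_one [NormedCommRing R] [NormOneClass R]
    (D : Finset ι) {f : ι → R} {E : ι → ℝ} (hf : ∀ i ∈ D, ‖f i - 1‖ ≤ Real.exp (E i) - 1) :
    ‖∏ i ∈ D, f i - 1‖ ≤ Real.exp (∑ i ∈ D, E i) - 1 := by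
  classical
  induction D using Finset.induction_on with
  | empty => simp
  | insert a D ha ih =>
    rw [prod_insert ha, sum_insert ha, Real.exp_add]
    have hD := ih fun i hi => hf i (mem_insert_of_mem hi)
    have ha' := hf a (mem_insert_self a D)
    have hnorm : ‖∏ i ∈ D, f i‖ ≤ Real.exp (∑ i ∈ D, E i) := by
      linarith [norm_le_norm_sub_add (∏ i ∈ D, f i) 1, norm_one (α := R)]
    calc ‖f a * ∏ i ∈ D, f i - 1‖
        = ‖(f a - 1) * ∏ i ∈ D, f i + (∏ i ∈ D, f i - 1)‖ := by ring_nf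
      _ ≤ ‖f a - 1‖ * ‖∏ i ∈ D, f i‖ + ‖∏ i ∈ D, f i - 1‖ :=
        norm_add_le_of_le (norm_mul_le _ _) le_rfl
      _ ≤ (Real.exp (E a) - 1) * Real.exp (∑ i ∈ D, E i) + (Real.exp (∑ i ∈ D, E i) - 1) := by
        gcongr
        exact (norm_nonneg _).trans ha'
      _ = Real.exp (E a) * Real.exp (∑ i ∈ D, E i) - 1 := by ring

lemma norm_tprod_sub_one_le_exp_tsum_sub_one [NormedCommRing R] [NormOneClass R]
    {f : ι → R} {E : ι → ℝ} (hE : Summable E) (hf : ∀ i, ‖f i - 1‖ ≤ Real.exp (E i) - 1) :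
    ‖∏' i, f i - 1‖ ≤ Real.exp (∑' i, E i) - 1 := by
  have hE0 : ∀ i, 0 ≤ E i := fun i =>
    Real.one_le_exp_iff.mp (by linarith [(norm_nonneg _).trans (hf i)])
  have hpartial : ∀ D : Finset ι, ‖∏ i ∈ D, f i - 1‖ ≤ Real.exp (∑' i, E i) - 1 := fun D =>
    (norm_prod_sub_one_le_exp_sum_sub_one D fun i _ => hf i).trans <| by
      gcongr; exact hE.sum_le_tsum D fun i _ => hE0 i
  by_cases hm : Multipliable f
  · exact le_of_tendsto (hm.hasProd.sub_const 1).norm (Eventually.of_forall hpartial)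
  · simpa [tprod_eq_one_of_not_multipliable hm] using hpartial ∅

lemma not_multipliable_of_tendsto_norm_cofinite_atTop [NormedField R] [Infinite ι] {f : ι → R}
    (hf0 : ∀ i, f i ≠ 0) (hf : Tendsto (‖f ·‖) cofinite atTop) : ¬ Multipliable f := by
  classical
  rintro ⟨P, hP⟩
  obtain ⟨D, hD⟩ := eventually_atTop.mp <| (Metric.tendsto_nhds.mp hP) 1 one_pos
  have hc : 0 < ‖∏ i ∈ D, f i‖ := norm_pos_iff.mpr <| prod_ne_zero_iff.mpr fun i _ => hf0 i
  obtain ⟨i, hiD, hi⟩ := (D.eventually_cofinite_notMem.and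
    (hf.eventually_ge_atTop ((‖P‖ + 2) / ‖∏ i ∈ D, f i‖))).exists
  have hnear := hD (insert i D) (subset_insert i D)
  rw [prod_insert hiD, dist_eq_norm] at hnear
  have hbig : ‖P‖ + 2 ≤ ‖f i * ∏ i ∈ D, f i‖ := by
    rw [norm_mul]; exact (div_le_iff₀ hc).mp hi
  linarith [norm_sub_norm_le (f i * ∏ i ∈ D, f i) P]

lemma Complex.ofReal_tprod (f : ι → ℝ) : ((∏' i, f i : ℝ) : ℂ) = ∏' i, (f i : ℂ) :=
  Complex.isometry_ofReal.isClosedEmbedding.map_tprod (g := Complex.ofRealHom) f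

lemma tprod_le_prod_of_nonneg_of_le_one {f : ι → ℝ} (h0 : ∀ i, 0 ≤ f i) (h1 : ∀ i, f i ≤ 1)
    (D : Finset ι) : ∏' i, f i ≤ ∏ i ∈ D, f i := by
  have hanti := Finset.prod_anti_set_of_le_one h0 h1
  have hprod : HasProd f (⨅ D : Finset ι, ∏ i ∈ D, f i) :=
    tendsto_atTop_ciInf hanti ⟨0, by rintro _ ⟨D, rfl⟩; exact prod_nonneg fun i _ => h0 i⟩
  exact hprod.tprod_eq ▸ hanti.le_of_tendsto hprod D

lemma summable_uncurry_of_tprod_tprod_one_sub_ne_zero {a : ι → κ → ℝ} (h0 : ∀ i k, 0 ≤ a i k)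
    (h1 : ∀ i k, a i k ≤ 1) (h : ∏' i, ∏' k, (1 - a i k) ≠ 0) : Summable (uncurry a) := by
  classical
  set v : ι → ℝ := fun i => ∏' k, (1 - a i k)
  have hv0 : ∀ i, 0 ≤ v i := fun i => tprod_nonneg fun k => by linarith [h1 i k]
  have hv1 : ∀ i, v i ≤ 1 := fun i => by
    simpa using tprod_le_prod_of_nonneg_of_le_one (fun k => by linarith [h1 i k])
      (fun k => by linarith [h0 i k]) ∅
  have hp0 : ∀ p, 0 ≤ uncurry a p := fun p => h0 p.1 p.2
  have hp1 : ∀ p, uncurry a p ≤ 1 := fun p => h1 p.1 p.2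
  have hQ : 0 < ∏' i, v i := (tprod_nonneg hv0).lt_of_ne' h
  refine summable_of_sum_le (c := -Real.log (∏' i, v i)) hp0 fun D => ?_
  set D₁ := D.image Prod.fst
  set D₂ := D.image Prod.snd
  have hsub : D ⊆ D₁ ×ˢ D₂ := fun p hp =>
    mem_product.mpr ⟨mem_image_of_mem _ hp, mem_image_of_mem _ hp⟩
  have hQle : ∏' i, v i ≤ Real.exp (-∑ p ∈ D, uncurry a p) :=
    calc ∏' i, v i ≤ ∏ i ∈ D₁, v i := tprod_le_prod_of_nonneg_of_le_one hv0 hv1 D₁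
      _ ≤ ∏ i ∈ D₁, ∏ k ∈ D₂, (1 - a i k) := prod_le_prod (fun i _ => hv0 i) fun i _ =>
          tprod_le_prod_of_nonneg_of_le_one (fun k => by linarith [h1 i k])
            (fun k => by linarith [h0 i k]) D₂
      _ = ∏ p ∈ D₁ ×ˢ D₂, (1 - uncurry a p) :=
          (prod_product (f := fun p => 1 - uncurry a p) _ _).symm
      _ ≤ ∏ p ∈ D, (1 - uncurry a p) := prod_le_prod_of_subset_of_le_one hsub
          (fun p _ => by linarith [hp1 p]) fun p _ _ => by linarith [hp0 p]
      _ ≤ ∏ p ∈ D, Real.exp (-uncurry a p) := prod_le_prod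
          (fun p _ => by linarith [hp1 p]) fun p _ => by
            linarith [Real.add_one_le_exp (-uncurry a p)]
      _ = Real.exp (-∑ p ∈ D, uncurry a p) := by rw [← Real.exp_sum, sum_neg_distrib]
  linarith [(Real.log_le_iff_le_exp hQ).mpr hQle]

end InfiniteProducts

section SelbergProduct

open Complex Real

variable {ι : Type*}

noncomputable def selbergFactor (t : ℝ) (s : ℂ) : ℂ := ∏' k : ℕ, (1 - cexp (-(s + k) * t))

lemma norm_cexp_neg_add_mul (s : ℂ) (k : ℕ) (t : ℝ) :
    ‖cexp (-(s + k) * t)‖ = rexp (-(s.re + k) * t) := by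
  simp [Complex.norm_exp]

lemma selbergFactor_zero (s : ℂ) : selbergFactor 0 s = 0 :=
  tprod_of_exists_eq_zero ⟨0, by simp⟩

/- `transLength γ` is negative when `0 < |tr γ| < 2` (junk value of `sqrt` at a negative number).
The factors then blow up, so the product diverges and `tprod` takes its junk value `1`. -/
lemma selbergFactor_of_neg {t : ℝ} (ht : t < 0) {s : ℂ} (hs : 0 < s.re) :
    selbergFactor t s = 1 := by
  have hlarge : ∀ k : ℕ, 1 < ‖cexp (-(s + k) * t)‖ := fun k => by
    rw [norm_cexp_neg_add_mul, Real.one_lt_exp_iff]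
    nlinarith [(k.cast_nonneg : (0 : ℝ) ≤ k)]
  refine tprod_eq_one_of_not_multipliable <|
    not_multipliable_of_tendsto_norm_cofinite_atTop (fun k h => ?_) ?_
  · exact (hlarge k).ne' (by rw [← sub_eq_zero.mp h, norm_one])
  · have hexp : Tendsto (fun k : ℕ => rexp (-(s.re + k) * t) - 1) atTop atTop := by
      refine tendsto_atTop_add_const_right _ _ (tendsto_exp_atTop.comp ?_)
      have : Tendsto (fun k : ℕ => (-t) * k + (-s.re * t)) atTop atTop :=
        tendsto_atTop_add_const_right _ _
          ((tendsto_natCast_atTop_atTop).const_mul_atTop (neg_pos.mpr ht))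
      exact this.congr fun k => by ring
    rw [Nat.cofinite_eq_atTop]
    refine tendsto_atTop_mono (fun k => ?_) hexp
    rw [← norm_cexp_neg_add_mul, norm_sub_rev]
    simpa using norm_sub_norm_le (cexp (-(s + k) * t)) 1

lemma norm_selbergFactor_sub_one_le {t : ℝ} {s : ℂ}
    (hs : Summable fun k : ℕ => rexp (-(s.re + k) * t)) :
    ‖selbergFactor t s - 1‖ ≤ rexp (∑' k : ℕ, rexp (-(s.re + k) * t)) - 1 :=
  norm_tprod_sub_one_le_exp_tsum_sub_one hs fun k => by
    rw [sub_sub_cancel_left, norm_neg, norm_cexp_neg_add_mul]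
    linarith [add_one_le_exp (rexp (-(s.re + k) * t))]

lemma selbergFactor_ofReal (t x : ℝ) :
    selbergFactor t x = ((∏' k : ℕ, (1 - rexp (-(x + k) * t)) : ℝ) : ℂ) := by
  rw [Complex.ofReal_tprod]
  push_cast
  rfl

theorem tendsto_tprod_selbergFactor_of_pos {ℓ : ι → ℝ} (hℓ : ∀ i, 0 < ℓ i) {x₀ : ℝ}
    (hx₀ : 0 ≤ x₀) (h : ∏' i, selbergFactor (ℓ i) x₀ ≠ 0) :
    Tendsto (fun s => ∏' i, selbergFactor (ℓ i) s) (comap re atTop) (𝓝 1) := by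
  set a : ℝ → ι × ℕ → ℝ := fun x p => rexp (-(x + p.2) * ℓ p.1)
  have ha_anti : ∀ {x y : ℝ}, x ≤ y → ∀ p, a y p ≤ a x p := fun hxy p =>
    exp_le_exp.mpr (by nlinarith [hℓ p.1])
  have hsum₀ : Summable (a x₀) := by
    refine summable_uncurry_of_tprod_tprod_one_sub_ne_zero (a := fun i k => a x₀ (i, k))
      (fun i k => (exp_pos _).le) (fun i k => exp_le_one_iff.mpr ?_) ?_
    · nlinarith [hℓ i, (k.cast_nonneg : (0 : ℝ) ≤ k)]
    · simpa only [selbergFactor_ofReal, ← Complex.ofReal_tprod, ofReal_ne_zero] using h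
  have hsum : ∀ {x}, x₀ ≤ x → Summable (a x) := fun hx =>
    hsum₀.of_nonneg_of_le (fun p => (exp_pos _).le) (ha_anti hx)
  have hbound : ∀ s : ℂ, x₀ ≤ s.re →
      ‖∏' i, selbergFactor (ℓ i) s - 1‖ ≤ rexp (∑' p, a s.re p) - 1 := fun s hs => by
    rw [(hsum hs).tsum_prod]
    exact norm_tprod_sub_one_le_exp_tsum_sub_one (hsum hs).prod fun i =>
      norm_selbergFactor_sub_one_le ((hsum hs).prod_factor i)
  have hlim : Tendsto (fun x => ∑' p, a x p) atTop (𝓝 0) := by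
    refine tsum_zero (α := ℝ) (β := ι × ℕ) ▸ tendsto_tsum_of_dominated_convergence hsum₀
      (fun p => ?_) ((eventually_ge_atTop x₀).mono fun x hx p => ?_)
    · refine tendsto_exp_atBot.comp ?_
      have : Tendsto (fun x : ℝ => x * (-ℓ p.1) + (-(p.2 : ℝ) * ℓ p.1)) atTop atBot :=
        tendsto_atBot_add_const_right _ _
          (tendsto_id.atTop_mul_const_of_neg (neg_neg_of_pos (hℓ p.1)))
      exact this.congr fun x => by ring
    · rw [Real.norm_of_nonneg (exp_pos _).le]
      exact ha_anti hx p
  rw [tendsto_iff_norm_sub_tendsto_zero]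
  refine squeeze_zero' (Eventually.of_forall fun s => norm_nonneg _)
    (((eventually_ge_atTop x₀).comap re).mono hbound) ?_
  have := ((Real.continuous_exp.tendsto 0).comp hlim).sub_const 1 |>.comp (tendsto_comap (f := re))
  simpa [Function.comp_def] using this

theorem tendsto_tprod_selbergFactor {ℓ : ι → ℝ} {x₀ : ℝ} (hx₀ : 0 < x₀)
    (h : ∏' i, selbergFactor (ℓ i) x₀ ≠ 0) :
    Tendsto (fun s => ∏' i, selbergFactor (ℓ i) s) (comap re atTop) (𝓝 1) := by
  have hℓ0 : ∀ i, ℓ i ≠ 0 := fun i hi =>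
    h (tprod_of_exists_eq_zero ⟨i, by rw [hi, selbergFactor_zero]⟩)
  have hrestrict : ∀ {s : ℂ}, 0 < s.re →
      ∏' i : {i | 0 < ℓ i}, selbergFactor (ℓ i) s = ∏' i, selbergFactor (ℓ i) s :=
    fun hs => tprod_subtype_eq_of_mulSupport_subset fun i hi => by
      by_contra hpos
      exact hi (selbergFactor_of_neg ((not_lt.mp hpos).lt_of_ne (hℓ0 i)) hs)
  have hpos := tendsto_tprod_selbergFactor_of_pos (fun i : {i | 0 < ℓ i} => i.2) hx₀.le
    (by rwa [hrestrict (by simpa using hx₀)])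
  refine hpos.congr' ?_
  filter_upwards [(eventually_gt_atTop 0).comap re] with s hs using hrestrict hs

end SelbergProduct

section ZeroCounting

open Metric Real

theorem sum_analyticOrderAt_toNat_le {f : ℂ → ℂ} {c : ℂ} {r R M : ℝ} (hr : 0 < r) (hrR : r < R)
    (hM : 1 ≤ M) (hf : AnalyticOnNhd ℂ f (closedBall c R)) (hfc : f c ≠ 0)
    (hfM : ∀ z ∈ sphere c R, ‖f z‖ ≤ M) {F : Finset ℂ} (hF : ∀ s ∈ F, s ∈ closedBall c r) :
    ((∑ s ∈ F, (analyticOrderAt f s).toNat : ℕ) : ℝ) ≤ log (M / ‖f c‖) / log (R / r) := by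
  classical
  have hR : 0 < R := hr.trans hrR
  have jensen := AnalyticOnNhd.sum_divisor_le (c := c) (r := r) (R := R) (by rwa [abs_of_pos hr])
    (by rwa [abs_of_pos hr, abs_of_pos hR]) hM (by rwa [abs_of_pos hR]) hfc
    (by rwa [abs_of_pos hR])
  rw [abs_of_pos hr] at jensen
  refine le_trans ?_ jensen
  set D := MeromorphicOn.divisor f (closedBall c r)
  have hfr : AnalyticOnNhd ℂ f (closedBall c r) := hf.mono (closedBall_subset_closedBall hrR.le)
  have hDF : ∀ s ∈ F, D s = (analyticOrderAt f s).toNat := fun s hs => by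
    rw [MeromorphicOn.AnalyticOnNhd.divisor_apply hfr (hF s hs)]
    cases analyticOrderAt f s <;> simp
  have hfin : D.support.Finite := D.finiteSupport (isCompact_closedBall c r)
  have hsum : ((∑ s ∈ F, (analyticOrderAt f s).toNat : ℕ) : ℤ) ≤ ∑ᶠ u, D u := by
    rw [finsum_eq_sum_of_support_subset D (s := F ∪ hfin.toFinset) (by simp), Nat.cast_sum,
      ← sum_congr rfl hDF]
    exact sum_le_sum_of_subset_of_nonneg subset_union_left fun u _ _ =>
      MeromorphicOn.AnalyticOnNhd.divisor_nonneg hfr u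
  exact_mod_cast hsum

theorem sum_analyticOrderAt_toNat_le_mul_rpow {f : ℂ → ℂ} (hf : Differentiable ℂ f) {c : ℂ}
    {ρ δ C K r : ℝ} (hρ : 0 < ρ) (hδ : 0 ≤ δ) (hC : 1 ≤ C) (hr : 1 ≤ r)
    (hc : 1 / 2 ≤ ‖f c‖) (hcK : ‖c‖ + 2 * ρ ≤ K * r)
    (hgrowth : ∀ z ∈ sphere c (2 * ρ), ‖f z‖ ≤ C * rexp (C * ‖z‖ ^ δ))
    {F : Finset ℂ} (hF : ∀ s ∈ F, s ∈ closedBall c ρ) :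
    ((∑ s ∈ F, (analyticOrderAt f s).toNat : ℕ) : ℝ)
      ≤ (log 2 + log C + C * K ^ δ) / log 2 * r ^ δ := by
  have hK : 0 ≤ K := nonneg_of_mul_nonneg_left (b := r) (by linarith [norm_nonneg c]) (by linarith)
  set M := C * rexp (C * (K * r) ^ δ)
  have hM : 1 ≤ M := one_le_mul_of_one_le_of_one_le hC (one_le_exp (by positivity))
  have hfM : ∀ z ∈ sphere c (2 * ρ), ‖f z‖ ≤ M := fun z hz => by
    have hz' : ‖z‖ ≤ K * r := by
      linarith [norm_le_norm_add_norm_sub' z c, (mem_sphere_iff_norm.mp hz).le]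
    refine (hgrowth z hz).trans <| mul_le_mul_of_nonneg_left (exp_le_exp.mpr ?_) (by linarith)
    exact mul_le_mul_of_nonneg_left (rpow_le_rpow (norm_nonneg z) hz' hδ) (by linarith)
  have hcount := sum_analyticOrderAt_toNat_le (by positivity) (by linarith) hM
    (fun z _ => hf.analyticAt z) (by rintro h; norm_num [h] at hc) hfM hF
  have hlog2 : 0 < log 2 := log_pos one_lt_two
  have hrδ : 1 ≤ r ^ δ := one_le_rpow hr hδ
  have hlogM : log (M / ‖f c‖) ≤ log 2 + log C + C * K ^ δ * r ^ δ := by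
    have hfc : 0 < ‖f c‖ := by linarith
    calc log (M / ‖f c‖) ≤ log (2 * M) :=
          log_le_log (by positivity) (by rw [div_le_iff₀ hfc]; nlinarith)
      _ = log 2 + log C + C * K ^ δ * r ^ δ := by
          rw [log_mul two_ne_zero (by positivity), log_mul (by positivity) (exp_pos _).ne',
            log_exp, mul_rpow hK (by linarith)]
          ring
  rw [mul_div_cancel_right₀ 2 hρ.ne'] at hcount
  refine hcount.trans ?_
  rw [div_mul_eq_mul_div]
  gcongr
  nlinarith [log_nonneg hC]

lemma Complex.mem_closedBall_of_abs_re_sub_le_of_abs_im_sub_le {z c : ℂ} {u v : ℝ}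
    (hre : |z.re - c.re| ≤ u) (him : |z.im - c.im| ≤ v) : z ∈ closedBall c (u + v) :=
  mem_closedBall_iff_norm.mpr <| (Complex.norm_le_abs_re_add_abs_im _).trans (add_le_add hre him)

lemma Complex.abs_re_le_abs_re_add_of_mem_sphere {z c : ℂ} {R : ℝ} (hz : z ∈ sphere c R) :
    |z.re| ≤ |c.re| + R := by
  have := Complex.abs_re_le_norm (z - c)
  rw [← dist_eq_norm, mem_sphere.mp hz, Complex.sub_re] at this
  linarith [abs_sub_abs_le_abs_sub z.re c.re]

theorem exists_sum_analyticOrderAt_toNat_le_rpow {f : ℂ → ℂ} (hf : Differentiable ℂ f)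
    {A δ C₀ : ℝ} (hA : 0 < A) (hδ : 0 ≤ δ)
    (hlow : ∀ s : ℂ, A ≤ s.re → 1 / 2 ≤ ‖f s‖)
    (hgrowth : ∀ K : ℝ, 0 < K → ∃ C : ℝ, 0 < C ∧ ∀ s : ℂ, |s.re| < K →
      ‖f s‖ ≤ C * rexp (C * ‖s‖ ^ δ)) :
    ∃ C₁ : ℝ, 0 < C₁ ∧ ∀ r : ℝ, 1 < r → ∀ F : Finset ℂ,
      (∀ s ∈ F, f s = 0 ∧ r ≤ |s.im| ∧ |s.im| ≤ r + 1 ∧ -C₀ < s.re) →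
      ((∑ s ∈ F, (analyticOrderAt f s).toNat : ℕ) : ℝ) ≤ C₁ * r ^ δ := by
  classical
  set ρ := A + |C₀| + 1
  obtain ⟨C, -, hC⟩ := hgrowth (A + 2 * ρ + 1) (by positivity)
  set B := (log 2 + log (max C 1) + max C 1 * (A + 2 * ρ + 2) ^ δ) / log 2
  have hB : 0 < B := by
    have := log_nonneg (le_max_right C 1)
    have := log_pos one_lt_two
    positivity
  refine ⟨2 * B, by positivity, fun r hr F hF => ?_⟩
  have hdisc : ∀ t : ℝ, |t| = r + 1 / 2 → ∀ G : Finset ℂ, (∀ s ∈ G, s ∈ closedBall ⟨A, t⟩ ρ) →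
      ((∑ s ∈ G, (analyticOrderAt f s).toNat : ℕ) : ℝ) ≤ B * r ^ δ := fun t ht G hG => by
    refine sum_analyticOrderAt_toNat_le_mul_rpow hf (by positivity) hδ (le_max_right C 1) hr.le
      (hlow _ le_rfl) ?_ (fun z hz => ?_) hG
    · have := Complex.norm_le_abs_re_add_abs_im ⟨A, t⟩
      simp only [abs_of_pos hA, ht] at this
      nlinarith [abs_nonneg C₀]
    · have hre := Complex.abs_re_le_abs_re_add_of_mem_sphere hz
      simp only [abs_of_pos hA] at hre
      refine (hC z (by linarith)).trans <| mul_le_mul (le_max_left _ _) (exp_le_exp.mpr ?_)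
        (exp_pos _).le (by positivity)
      exact mul_le_mul_of_nonneg_right (le_max_left _ _) (by positivity)
  have hball : ∀ s ∈ F, ∀ t : ℝ, |s.im - t| ≤ 1 / 2 → s ∈ closedBall ⟨A, t⟩ ρ := by
    intro s hs t hst
    obtain ⟨hfs, -, -, hre⟩ := hF s hs
    have hreA : s.re < A := not_le.mp fun h => by
      have := hlow s h
      rw [hfs, norm_zero] at this
      norm_num at this
    refine closedBall_subset_closedBall (by linarith) <|
      Complex.mem_closedBall_of_abs_re_sub_le_of_abs_im_sub_le (u := A + |C₀|) ?_ hst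
    exact abs_le.mpr
      ⟨by simp only; linarith [le_abs_self C₀], by simp only; linarith [abs_nonneg C₀]⟩
  rw [← sum_filter_add_sum_filter_not F (fun s => 0 ≤ s.im), Nat.cast_add, two_mul, add_mul]
  refine add_le_add (hdisc (r + 1 / 2) (abs_of_pos (by linarith)) _ fun s hs => ?_)
    (hdisc (-(r + 1 / 2)) (by rw [abs_neg, abs_of_pos (by linarith)]) _ fun s hs => ?_)
  · obtain ⟨hsF, him⟩ := mem_filter.mp hs
    obtain ⟨-, h1, h2, -⟩ := hF s hsF
    rw [abs_of_nonneg him] at h1 h2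
    exact hball s hsF _ (abs_le.mpr ⟨by linarith, by linarith⟩)
  · obtain ⟨hsF, him⟩ := mem_filter.mp hs
    obtain ⟨-, h1, h2, -⟩ := hF s hsF
    rw [abs_of_neg (not_le.mp him)] at h1 h2
    exact hball s hsF _ (abs_le.mpr ⟨by linarith, by linarith⟩)

lemma Differentiable.apply_eq_zero_of_forall_ofReal_gt {f : ℂ → ℂ} (hf : Differentiable ℂ f)
    {a : ℝ} (h : ∀ x : ℝ, a < x → f x = 0) (z : ℂ) : f z = 0 := by
  have hreal : Tendsto (fun x : ℝ => (x : ℂ)) (𝓝[≠] (a + 1)) (𝓝[≠] ↑(a + 1)) :=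
    tendsto_nhdsWithin_of_tendsto_nhds_of_eventually_within _
      (Complex.continuous_ofReal.continuousAt.tendsto.mono_left nhdsWithin_le_nhds)
      (eventually_nhdsWithin_of_forall fun x hx h => hx (Complex.ofReal_injective h))
  have hfreq : ∃ᶠ z in 𝓝[≠] ↑(a + 1), f z = 0 := by
    refine hreal.frequently (Eventually.frequently ?_)
    filter_upwards [nhdsWithin_le_nhds (lt_mem_nhds (lt_add_one a))] with x hx using h x hx
  exact AnalyticOnNhd.eqOn_zero_of_preconnected_of_frequently_eq_zero (fun z _ => hf.analyticAt z)
    isPreconnected_univ (Set.mem_univ _) hfreq (Set.mem_univ z)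

end ZeroCounting

/-- Let `Z` be an entire function agreeing with the Selberg zeta function
of a convex co-compact classical Schottky group for `Re s > 1` and bounded by
`C₁ exp(C₁ |s|^δ)` on every strip `|Re s| < C₀`.  Then for every `C₀ > 0` there is
`C₁ > 0` such that for every `r > 1` the number of zeros `s` of `Z`, counted with
multiplicity (the order of vanishing of `Z` at `s`), with `r ≤ |Im s| ≤ r + 1` and
`Re s > -C₀`, is at most `C₁ r^δ`. -/
theorem schottky_zeta_zero_count {l : ℕ} (S : SchottkyData l) (Z : ℂ → ℂ)
    (hZ : Differentiable ℂ Z)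
    (hagree : ∀ s : ℂ, 1 < s.re → Z s = S.selbergZeta s)
    (hbound : ∀ C₀ : ℝ, 0 < C₀ → ∃ C₁ : ℝ, 0 < C₁ ∧ ∀ s : ℂ, |s.re| < C₀ →
      ‖Z s‖ ≤ C₁ * Real.exp (C₁ * ‖s‖ ^ S.dimLimitSet)) :
    ∀ C₀ : ℝ, 0 < C₀ → ∃ C₁ : ℝ, 0 < C₁ ∧ ∀ r : ℝ, 1 < r →
      ∀ F : Finset ℂ,
        (∀ s ∈ F, Z s = 0 ∧ r ≤ |s.im| ∧ |s.im| ≤ r + 1 ∧ -C₀ < s.re) →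
        ((∑ s ∈ F, (analyticOrderAt Z s).toNat : ℕ) : ℝ)
          ≤ C₁ * r ^ S.dimLimitSet := by
  intro C₀ _
  by_cases hZ0 : ∀ x : ℝ, 1 < x → Z x = 0
  · have htop : ∀ s, analyticOrderAt Z s = ⊤ := fun s =>
      analyticOrderAt_eq_top.mpr (Eventually.of_forall (hZ.apply_eq_zero_of_forall_ofReal_gt hZ0))
    refine ⟨1, one_pos, fun r hr F _ => ?_⟩
    simp only [htop, ENat.toNat_top, Finset.sum_const_zero, Nat.cast_zero, one_mul]
    positivity
  obtain ⟨A₀, hA₀, hZA₀⟩ : ∃ x : ℝ, 1 < x ∧ Z x ≠ 0 := by simpa using hZ0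
  have hζA₀ : S.selbergZeta A₀ ≠ 0 := hagree A₀ (by simpa using hA₀) ▸ hZA₀
  have hζ : Tendsto S.selbergZeta (comap Complex.re atTop) (𝓝 1) :=
    tendsto_tprod_selbergFactor (by linarith) hζA₀
  obtain ⟨A, -, hA⟩ := (atTop_basis.comap Complex.re).eventually_iff.mp <|
    hζ.norm.eventually_const_le (by norm_num : (1 / 2 : ℝ) < ‖(1 : ℂ)‖)
  refine exists_sum_analyticOrderAt_toNat_le_rpow hZ (A := max A 2) (by positivity)
    ENNReal.toReal_nonneg (fun s hs => ?_) hbound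
  rw [hagree s (by linarith [le_max_right A 2])]
  exact hA (le_trans (le_max_left A 2) hs)
end

section
/- For every integer n ≥ 1 and every real C > 0 there exists a constant C₁ > 0 such that for all real r ≥ 1: the infinite product ∏_{ℓ=0}^∞ (1 + exp(C·r − ℓ^{1/n}/C)) converges and is at most exp(C₁·r^{n+1}); equivalently, ∑_{ℓ=0}^∞ log(1 + exp(C·r − ℓ^{1/n}/C)) ≤ C₁·r^{n+1}. -/
open Real

private lemma aux_hasProd_exp {g : ℕ → ℝ} {s : ℝ} (h : HasSum g s) :
    HasProd (fun i => Real.exp (g i)) (Real.exp s) := by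
  have := (Real.continuous_exp.tendsto s).comp h
  simpa [HasProd, Function.comp_def, Real.exp_sum] using this

private lemma aux_summable (n : ℕ) (hn : 1 ≤ n) (c : ℝ) (hc : 0 < c) :
    Summable fun ℓ : ℕ => Real.exp (-((ℓ : ℝ) ^ ((n : ℝ)⁻¹) / c)) := by
  have hn0 : (n : ℝ) ≠ 0 := Nat.cast_ne_zero.mpr (Nat.one_le_iff_ne_zero.mp hn)
  rw [← summable_nat_add_iff 1]
  set K : ℝ := (Nat.factorial (2 * n) : ℝ) * c ^ (2 * n) with hK
  have hKpos : 0 < K := by positivity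
  have hsum : Summable (fun ℓ : ℕ => K * (1 / ((ℓ : ℝ) + 1) ^ 2)) := by
    have h0 : Summable (fun ℓ : ℕ => 1 / (ℓ : ℝ) ^ 2) :=
      Real.summable_one_div_nat_pow.mpr one_lt_two
    have h1 := (summable_nat_add_iff 1).mpr h0
    exact (h1.congr (fun ℓ => by push_cast; ring)).mul_left K
  refine Summable.of_nonneg_of_le (fun ℓ => (Real.exp_pos _).le) (fun ℓ => ?_) hsum
  set m : ℝ := (ℓ : ℝ) + 1 with hm
  have hm1 : (1 : ℝ) ≤ m := by simp [hm]
  have hm0 : (0 : ℝ) ≤ m := by linarith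
  have hcast : ((ℓ + 1 : ℕ) : ℝ) = m := by push_cast [hm]; ring
  rw [hcast]
  set x : ℝ := m ^ ((n : ℝ)⁻¹) with hx
  have hx0 : 0 < x := Real.rpow_pos_of_pos (by linarith) _
  have hxy : x ^ (2 * n) = m ^ 2 := by
    rw [hx, ← Real.rpow_natCast (m ^ ((n : ℝ)⁻¹)) (2 * n), ← Real.rpow_mul hm0]
    have : (n : ℝ)⁻¹ * ((2 * n : ℕ) : ℝ) = 2 := by
      push_cast; field_simp
    rw [this]
    exact Real.rpow_two m
  have hkey : (x / c) ^ (2 * n) / (Nat.factorial (2 * n) : ℝ) ≤ Real.exp (x / c) :=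
    Real.pow_div_factorial_le_exp (x := x / c) (by positivity) (2 * n)
  have hexp : Real.exp (-(x / c)) = (Real.exp (x / c))⁻¹ := Real.exp_neg _
  have hfac : (0 : ℝ) < (Nat.factorial (2 * n) : ℝ) := by positivity
  have hxc : (x / c) ^ (2 * n) = m ^ 2 / c ^ (2 * n) := by
    rw [div_pow, hxy]
  have hm2 : (0 : ℝ) < m ^ 2 := by positivity
  have hexp_pos : (0 : ℝ) < Real.exp (x / c) := Real.exp_pos _
  rw [hexp]
  rw [hxc] at hkey
  have h2 : m ^ 2 / c ^ (2 * n) / (Nat.factorial (2 * n) : ℝ) ≤ Real.exp (x / c) := hkey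
  have h3 : m ^ 2 / K ≤ Real.exp (x / c) := by
    rw [hK]
    calc m ^ 2 / ((Nat.factorial (2 * n) : ℝ) * c ^ (2 * n))
          = m ^ 2 / c ^ (2 * n) / (Nat.factorial (2 * n) : ℝ) := by
          rw [div_div]; ring_nf
      _ ≤ Real.exp (x / c) := h2
  have h4 : (Real.exp (x / c))⁻¹ ≤ (m ^ 2 / K)⁻¹ := by
    apply inv_anti₀ (by positivity) h3
  calc (Real.exp (x / c))⁻¹ ≤ (m ^ 2 / K)⁻¹ := h4
    _ = K * (1 / m ^ 2) := by field_simp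
    _ ≤ K * (1 / m ^ 2) := le_rfl

set_option maxHeartbeats 1200000 in
/-- For every `n ≥ 1` and `C > 0` there is `C₁ > 0` such that for all
`r ≥ 1` the product `∏_{ℓ=0}^∞ (1 + exp(C r - ℓ^{1/n}/C))` converges and is at most
`exp(C₁ r^{n+1})`; equivalently
`∑_{ℓ=0}^∞ log(1 + exp(C r - ℓ^{1/n}/C)) ≤ C₁ r^{n+1}`. -/
theorem product_bound_order_n_plus_one (n : ℕ) (hn : 1 ≤ n) (C : ℝ) (hC : 0 < C) :
    ∃ C₁ : ℝ, 0 < C₁ ∧ ∀ r : ℝ, 1 ≤ r →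
      Summable (fun ℓ : ℕ => Real.exp (C * r - (ℓ : ℝ) ^ ((n : ℝ)⁻¹) / C)) ∧
      Multipliable (fun ℓ : ℕ => 1 + Real.exp (C * r - (ℓ : ℝ) ^ ((n : ℝ)⁻¹) / C)) ∧
      (∏' ℓ : ℕ, (1 + Real.exp (C * r - (ℓ : ℝ) ^ ((n : ℝ)⁻¹) / C)))
        ≤ Real.exp (C₁ * r ^ (n + 1)) ∧
      (∑' ℓ : ℕ, Real.log (1 + Real.exp (C * r - (ℓ : ℝ) ^ ((n : ℝ)⁻¹) / C)))
        ≤ C₁ * r ^ (n + 1) := by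
  have hS : Summable (fun ℓ : ℕ => Real.exp (-((ℓ : ℝ) ^ ((n : ℝ)⁻¹) / (2 * C)))) :=
    aux_summable n hn (2 * C) (by linarith)
  set S : ℝ := ∑' ℓ : ℕ, Real.exp (-((ℓ : ℝ) ^ ((n : ℝ)⁻¹) / (2 * C))) with hSdef
  have hS0 : 0 ≤ S := tsum_nonneg fun ℓ => (Real.exp_pos _).le
  have hC₁pos : 0 < ((2 * C ^ 2) ^ n + 1) * (1 + C) + S := by
    have h1 : (0:ℝ) < ((2 * C ^ 2) ^ n + 1) * (1 + C) := by positivity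
    linarith
  refine ⟨((2 * C ^ 2) ^ n + 1) * (1 + C) + S, hC₁pos, fun r hr => ?_⟩
  set f : ℕ → ℝ := fun ℓ => Real.exp (C * r - (ℓ : ℝ) ^ ((n : ℝ)⁻¹) / C) with hf
  -- summability of f
  have hsumf : Summable f := by
    have hb : Summable fun ℓ : ℕ => Real.exp (-((ℓ : ℝ) ^ ((n : ℝ)⁻¹) / C)) :=
      aux_summable n hn C hC
    have := hb.mul_left (Real.exp (C * r))
    refine this.congr fun ℓ => ?_
    rw [← Real.exp_add, ← sub_eq_add_neg, hf]
  -- summability of logs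
  have hfpos : ∀ ℓ, 0 < f ℓ := fun ℓ => Real.exp_pos _
  have hlog_nonneg : ∀ ℓ, 0 ≤ Real.log (1 + f ℓ) := fun ℓ =>
    Real.log_nonneg (by linarith [hfpos ℓ])
  have hlog_le : ∀ ℓ, Real.log (1 + f ℓ) ≤ f ℓ := fun ℓ => by
    have := Real.log_le_sub_one_of_pos (x := 1 + f ℓ) (by linarith [hfpos ℓ])
    linarith
  have hsumlog : Summable (fun ℓ => Real.log (1 + f ℓ)) :=
    Summable.of_nonneg_of_le hlog_nonneg hlog_le hsumf
  -- the cutoff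
  set L : ℕ := ⌈(2 * C ^ 2 * r) ^ n⌉₊ with hL
  have hLb : ((2 * C ^ 2 * r) ^ n : ℝ) ≤ (L : ℝ) := Nat.le_ceil _
  have hLub : (L : ℝ) ≤ (2 * C ^ 2 * r) ^ n + 1 :=
    (Nat.ceil_lt_add_one (by positivity)).le
  -- head bound
  have hhead : ∀ ℓ : ℕ, Real.log (1 + f ℓ) ≤ 1 + C * r := by
    intro ℓ
    have hx0 : (0 : ℝ) ≤ (ℓ : ℝ) ^ ((n : ℝ)⁻¹) := Real.rpow_nonneg (Nat.cast_nonneg _) _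
    have hfle : f ℓ ≤ Real.exp (C * r) := by
      apply Real.exp_le_exp.mpr
      have : 0 ≤ (ℓ : ℝ) ^ ((n : ℝ)⁻¹) / C := by positivity
      linarith
    have h1 : (1 : ℝ) ≤ Real.exp (C * r) := Real.one_le_exp (by positivity)
    calc Real.log (1 + f ℓ) ≤ Real.log (2 * Real.exp (C * r)) := by
          apply Real.log_le_log (by linarith [hfpos ℓ])
          linarith
      _ = Real.log 2 + C * r := by rw [Real.log_mul (by norm_num) (Real.exp_ne_zero _),
          Real.log_exp]
      _ ≤ 1 + C * r := by
          have : Real.log 2 ≤ 1 := by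
            calc Real.log 2 ≤ 2 - 1 := Real.log_le_sub_one_of_pos (by norm_num)
              _ = 1 := by norm_num
          linarith
  -- tail bound
  have htail : ∀ ℓ : ℕ, Real.log (1 + f (ℓ + L))
      ≤ Real.exp (-((ℓ : ℝ) ^ ((n : ℝ)⁻¹) / (2 * C))) := by
    intro ℓ
    have hn0 : (0 : ℝ) < (n : ℝ) := by exact_mod_cast hn
    have hge : ((2 * C ^ 2 * r) ^ n : ℝ) ≤ ((ℓ + L : ℕ) : ℝ) := by
      calc ((2 * C ^ 2 * r) ^ n : ℝ) ≤ (L : ℝ) := hLb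
        _ ≤ ((ℓ + L : ℕ) : ℝ) := by push_cast; linarith [Nat.cast_nonneg (α := ℝ) ℓ]
    have hbase : (0 : ℝ) ≤ 2 * C ^ 2 * r := by positivity
    have hroot : 2 * C ^ 2 * r ≤ ((ℓ + L : ℕ) : ℝ) ^ ((n : ℝ)⁻¹) := by
      have h1 : ((2 * C ^ 2 * r) ^ n : ℝ) ^ ((n : ℝ)⁻¹)
          ≤ ((ℓ + L : ℕ) : ℝ) ^ ((n : ℝ)⁻¹) :=
        Real.rpow_le_rpow (by positivity) hge (by positivity)
      have h2 : ((2 * C ^ 2 * r) ^ n : ℝ) ^ ((n : ℝ)⁻¹) = 2 * C ^ 2 * r := by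
        rw [← Real.rpow_natCast (2 * C ^ 2 * r) n, ← Real.rpow_mul hbase,
          mul_inv_cancel₀ hn0.ne', Real.rpow_one]
      rwa [h2] at h1
    have hmono : ((ℓ : ℝ)) ^ ((n : ℝ)⁻¹) ≤ ((ℓ + L : ℕ) : ℝ) ^ ((n : ℝ)⁻¹) := by
      apply Real.rpow_le_rpow (Nat.cast_nonneg _) (by push_cast; linarith [Nat.cast_nonneg (α := ℝ) L]) (by positivity)
    have hexp_arg : C * r - ((ℓ + L : ℕ) : ℝ) ^ ((n : ℝ)⁻¹) / C
        ≤ -((ℓ : ℝ) ^ ((n : ℝ)⁻¹) / (2 * C)) := by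
      set x := ((ℓ + L : ℕ) : ℝ) ^ ((n : ℝ)⁻¹)
      have hx : 2 * C ^ 2 * r ≤ x := hroot
      have hxc : x / C = x / (2 * C) + x / (2 * C) := by field_simp; ring
      have h1 : C * r ≤ x / (2 * C) := by
        rw [le_div_iff₀ (by linarith)]
        nlinarith
      have h2 : (ℓ : ℝ) ^ ((n : ℝ)⁻¹) / (2 * C) ≤ x / (2 * C) := by
        apply div_le_div_of_nonneg_right ?_ (by linarith)
        exact hmono
      linarith
    calc Real.log (1 + f (ℓ + L)) ≤ f (ℓ + L) := hlog_le _
      _ ≤ Real.exp (-((ℓ : ℝ) ^ ((n : ℝ)⁻¹) / (2 * C))) := Real.exp_le_exp.mpr hexp_arg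
  -- total bound on the sum of logs
  have hsplit : (∑' ℓ, Real.log (1 + f ℓ))
      = (∑ i ∈ Finset.range L, Real.log (1 + f i)) + ∑' ℓ, Real.log (1 + f (ℓ + L)) :=
    (Summable.sum_add_tsum_nat_add L hsumlog).symm
  have hheadsum : (∑ i ∈ Finset.range L, Real.log (1 + f i)) ≤ (L : ℝ) * (1 + C * r) := by
    calc (∑ i ∈ Finset.range L, Real.log (1 + f i))
        ≤ ∑ _i ∈ Finset.range L, (1 + C * r) := Finset.sum_le_sum fun i _ => hhead i
      _ = (L : ℝ) * (1 + C * r) := by rw [Finset.sum_const, Finset.card_range]; push_cast; ring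
  have htailsum : (∑' ℓ, Real.log (1 + f (ℓ + L))) ≤ S := by
    apply Summable.tsum_le_tsum htail ((summable_nat_add_iff L).mpr hsumlog) hS
  have hr1 : (1 : ℝ) ≤ r ^ n := one_le_pow₀ hr
  have hrpow : r ^ (n + 1) = r ^ n * r := pow_succ r n
  have hbig : (∑' ℓ, Real.log (1 + f ℓ))
      ≤ (((2 * C ^ 2) ^ n + 1) * (1 + C) + S) * r ^ (n + 1) := by
    rw [hsplit]
    have hLle : (L : ℝ) ≤ ((2 * C ^ 2) ^ n + 1) * r ^ n := by
      have : ((2 * C ^ 2 * r) ^ n : ℝ) = (2 * C ^ 2) ^ n * r ^ n := mul_pow _ _ _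
      nlinarith [hLub]
    have h1Cr : 1 + C * r ≤ (1 + C) * r := by nlinarith
    have hLpos : (0 : ℝ) ≤ (L : ℝ) := Nat.cast_nonneg _
    have hhb : (L : ℝ) * (1 + C * r) ≤ ((2 * C ^ 2) ^ n + 1) * (1 + C) * r ^ (n + 1) := by
      have hpos1 : (0 : ℝ) < (2 * C ^ 2) ^ n + 1 := by positivity
      calc (L : ℝ) * (1 + C * r) ≤ (((2 * C ^ 2) ^ n + 1) * r ^ n) * ((1 + C) * r) := by
            apply mul_le_mul hLle h1Cr (by nlinarith) (by positivity)
        _ = ((2 * C ^ 2) ^ n + 1) * (1 + C) * r ^ (n + 1) := by rw [hrpow]; ring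
    have hSb : S ≤ S * r ^ (n + 1) := by
      have : (1 : ℝ) ≤ r ^ (n + 1) := one_le_pow₀ hr
      nlinarith
    nlinarith [hhb, htailsum, hheadsum, hSb]
  -- the product
  have hexp_log : ∀ ℓ, Real.exp (Real.log (1 + f ℓ)) = 1 + f ℓ := fun ℓ =>
    Real.exp_log (by linarith [hfpos ℓ])
  have hprod : HasProd (fun ℓ => 1 + f ℓ) (Real.exp (∑' ℓ, Real.log (1 + f ℓ))) := by
    have := aux_hasProd_exp hsumlog.hasSum
    simpa only [hexp_log] using this
  refine ⟨hsumf, hprod.multipliable, ?_, hbig⟩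
  rw [hprod.tprod_eq]
  exact Real.exp_le_exp.mpr hbig
end

section
/- Let Γ ⊆ SL(2,ℝ) be a convex co-compact classical Schottky group. Then there exists a real s₀ > 0 such that for every s ∈ ℂ with Re s > s₀ the double family ((e^{−(s+k)·ℓ(γ)}))_{ {γ} primitive conjugacy class, k ∈ ℕ} is summable, the double product Z_Γ(s) = ∏_{{γ}} ∏_{k=0}^∞ (1 − e^{−(s+k)·ℓ(γ)}) converges, and |Z_Γ(s)| > 1/2. -/
open Matrix

/-!
Every generator maps the complement of the interior of one interval onto another, so a cyclically
reduced word `w` in the generators and their inverses maps the interval attached to its first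
letter into its own interior (ping-pong), and has a fixed point `p` there. The Möbius-invariant
hyperbolic metrics `|dx| / crossWeight a b x` of disjoint intervals compare with a uniform factor
`Λ < 1`, so the multiplier of `w` at `p` is at most `Λ ^ |w|` and `ℓ(w) ≥ |w| log Λ⁻¹`.
Primitive conjugacy classes are coded injectively by cyclically reduced words, at most `(2l) ^ n`
of length `n`, so `∑ e^{-(σ + k) ℓ(γ)}` converges for large `σ` and tends to `0`. Once it is below
`1/4`, the bound `|log (1 - z)| ≤ 3/2 |z|` gives `|Z_Γ(s)| ≥ e^{-3/8} > 1/2`.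
-/

section Mobius

variable (g h : SL2R) {x y : ℝ}

-- `mobiusR g` has derivative `(mobiusDenom g x) ^ (-2)` at `x`.
def mobiusDenom (x : ℝ) : ℝ := g 1 0 * x + g 1 1

theorem mobiusOP_coe : mobiusOP g x =
    if mobiusDenom g x = 0 then OnePoint.infty else ((mobiusR g x : ℝ) : OnePoint ℝ) := rfl

theorem mobiusOP_infty : mobiusOP g OnePoint.infty =
    if g 1 0 = 0 then OnePoint.infty else ((g 0 0 / g 1 0 : ℝ) : OnePoint ℝ) := rfl

theorem mobiusR_eq_div : mobiusR g x = (g 0 0 * x + g 0 1) / mobiusDenom g x := rfl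

theorem SL2R.det_eq : g 0 0 * g 1 1 - g 0 1 * g 1 0 = 1 := by
  rw [← Matrix.det_fin_two]
  exact g.2

theorem SL2R.mul_apply' (i j : Fin 2) : (g * h) i j = g i 0 * h 0 j + g i 1 * h 1 j := by
  simp [Matrix.mul_apply, Fin.sum_univ_two]

theorem mobiusDenom_mul (hx : mobiusDenom h x ≠ 0) :
    mobiusDenom (g * h) x = mobiusDenom h x * mobiusDenom g (mobiusR h x) := by
  simp only [mobiusDenom, mobiusR, SL2R.mul_apply'] at *
  field_simp
  ring

theorem mobiusR_mul (hx : mobiusDenom h x ≠ 0) :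
    mobiusR (g * h) x = mobiusR g (mobiusR h x) := by
  have := mobiusDenom_mul g h hx
  simp only [mobiusDenom, mobiusR, SL2R.mul_apply'] at *
  rw [this]
  field_simp
  ring

theorem mobiusR_sub_mobiusR (hx : mobiusDenom g x ≠ 0) (hy : mobiusDenom g y ≠ 0) :
    mobiusR g x - mobiusR g y = (x - y) / (mobiusDenom g x * mobiusDenom g y) := by
  unfold mobiusDenom at *
  rw [mobiusR, mobiusR, div_sub_div _ _ hx hy]
  congr 1
  linear_combination (x - y) * SL2R.det_eq g

theorem eq_of_mobiusR_eq (hx : mobiusDenom g x ≠ 0) (hy : mobiusDenom g y ≠ 0)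
    (h : mobiusR g x = mobiusR g y) : x = y := by
  have := mobiusR_sub_mobiusR g hx hy
  rw [h, sub_self, eq_comm, div_eq_zero_iff] at this
  exact sub_eq_zero.mp (this.resolve_right (mul_ne_zero hx hy))

theorem mobiusDenom_inv_mobiusR (hx : mobiusDenom g x ≠ 0) :
    mobiusDenom g⁻¹ (mobiusR g x) = (mobiusDenom g x)⁻¹ := by
  simp only [mobiusDenom, mobiusR, Matrix.SpecialLinearGroup.SL2_inv_expl] at *
  simp only [Matrix.cons_val', Matrix.cons_val_zero, Matrix.cons_val_one, Matrix.empty_val',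
    Matrix.cons_val_fin_one]
  field_simp
  linear_combination SL2R.det_eq g

theorem mobiusDenom_inv_mobiusR_ne_zero (hx : mobiusDenom g x ≠ 0) :
    mobiusDenom g⁻¹ (mobiusR g x) ≠ 0 :=
  mobiusDenom_inv_mobiusR g hx ▸ inv_ne_zero hx

theorem mobiusDenom_inv : mobiusDenom g⁻¹ x = g 0 0 - g 1 0 * x := by
  simp [mobiusDenom, Matrix.SpecialLinearGroup.SL2_inv_expl]
  ring

theorem mobiusR_inv_mobiusR (hx : mobiusDenom g x ≠ 0) :
    mobiusR g⁻¹ (mobiusR g x) = x := by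
  rw [← mobiusR_mul _ _ hx, inv_mul_cancel]
  simp [mobiusR]

theorem continuousAt_mobiusR (hx : mobiusDenom g x ≠ 0) : ContinuousAt (mobiusR g) x :=
  ((continuous_const.mul continuous_id).add continuous_const).continuousAt.div
    ((continuous_const.mul continuous_id).add continuous_const).continuousAt hx

theorem mobiusR_ne_div (hc : g 1 0 ≠ 0) (hx : mobiusDenom g x ≠ 0) :
    mobiusR g x ≠ g 0 0 / g 1 0 := by
  rw [mobiusR_eq_div, Ne, div_eq_div_iff hx hc]
  unfold mobiusDenom
  intro h
  have := SL2R.det_eq g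
  linarith

theorem mobiusDenom_eq_zero_iff (hc : g 1 0 ≠ 0) :
    mobiusDenom g x = 0 ↔ x = -g 1 1 / g 1 0 := by
  rw [mobiusDenom, eq_div_iff hc]
  constructor <;> intro h <;> linarith

theorem trace_eq_of_mobiusR_eq_self (hx : mobiusDenom g x ≠ 0) (hfix : mobiusR g x = x) :
    Matrix.trace (g : Matrix (Fin 2) (Fin 2) ℝ) = mobiusDenom g x + (mobiusDenom g x)⁻¹ := by
  rw [mobiusR_eq_div, div_eq_iff hx] at hfix
  rw [Matrix.trace_fin_two]
  field_simp
  unfold mobiusDenom at *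
  linear_combination SL2R.det_eq g + g 1 0 * hfix

end Mobius

theorem arcosh_add_inv_div_two {m : ℝ} (hm : 1 ≤ m) : arcosh ((m + m⁻¹) / 2) = Real.log m := by
  have hinv : m⁻¹ ≤ m := (inv_le_one_of_one_le₀ hm).trans hm
  have hsq : ((m + m⁻¹) / 2) ^ 2 - 1 = ((m - m⁻¹) / 2) ^ 2 := by
    field_simp
    ring
  rw [arcosh, hsq, Real.sqrt_sq (by linarith)]
  ring_nf

theorem transLength_eq_log_sq {g : SL2R} {x : ℝ} (hd : mobiusDenom g x ≠ 0)
    (hfix : mobiusR g x = x) (h1 : 1 ≤ mobiusDenom g x ^ 2) :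
    transLength g = Real.log (mobiusDenom g x ^ 2) := by
  set μ := mobiusDenom g x
  have hμ : 1 ≤ |μ| := one_le_sq_iff_one_le_abs _ |>.mp h1
  have habs : |μ + μ⁻¹| = |μ| + |μ|⁻¹ := by
    rw [← abs_inv, abs_add_eq_add_abs_iff]
    rcases le_total 0 μ with h | h
    · exact .inl ⟨h, inv_nonneg.mpr h⟩
    · exact .inr ⟨h, inv_nonpos.mpr h⟩
  rw [transLength, trace_eq_of_mobiusR_eq_self g hd hfix, habs, arcosh_add_inv_div_two hμ,
    ← sq_abs, Real.log_pow]
  push_cast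
  ring

theorem transLength_eq_of_isConj {g h : SL2R} (hgh : IsConj g h) :
    transLength h = transLength g := by
  obtain ⟨u, rfl⟩ := isConj_iff.mp hgh
  rw [transLength, transLength, Matrix.SpecialLinearGroup.coe_mul,
    Matrix.SpecialLinearGroup.coe_mul, Matrix.trace_mul_cycle, ← Matrix.SpecialLinearGroup.coe_mul,
    inv_mul_cancel, Matrix.SpecialLinearGroup.coe_one, one_mul]

section CrossWeight

open Set

/-- `|dx| / crossWeight a b x` is the hyperbolic metric of either arc of `ℝ ∪ {∞}` cut out by `a`
and `b`; it is Möbius invariant (`crossWeight_mobiusR`). -/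
noncomputable def crossWeight (a b x : ℝ) : ℝ := |(x - a) * (x - b) / (b - a)|

variable {a b a' b' x : ℝ}

theorem crossWeight_comm (a b x : ℝ) : crossWeight b a x = crossWeight a b x := by
  rw [crossWeight, crossWeight, ← abs_neg]
  congr 1
  rw [← div_neg, neg_sub]
  ring

theorem crossWeight_mobiusR (g : SL2R) (ha : mobiusDenom g a ≠ 0) (hb : mobiusDenom g b ≠ 0)
    (hx : mobiusDenom g x ≠ 0) :
    crossWeight (mobiusR g a) (mobiusR g b) (mobiusR g x) * mobiusDenom g x ^ 2
      = crossWeight a b x := by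
  rw [crossWeight, crossWeight, mobiusR_sub_mobiusR g hx ha, mobiusR_sub_mobiusR g hx hb,
    mobiusR_sub_mobiusR g hb ha, ← abs_of_nonneg (sq_nonneg (mobiusDenom g x)), ← abs_mul]
  congr 1
  rcases eq_or_ne b a with rfl | hba
  · simp
  · field_simp

theorem crossWeight_pos (hx : x ∈ Ioo a b) : 0 < crossWeight a b x := by
  have := hx.1.trans hx.2
  exact abs_pos.mpr (div_ne_zero (mul_ne_zero (by linarith [hx.1]) (by linarith [hx.2]))
    (by linarith))

theorem crossWeight_of_mem_Icc (hab : a < b) (hx : x ∈ Icc a b) :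
    crossWeight a b x = (x - a) * (b - x) / (b - a) := by
  rw [crossWeight, abs_of_nonpos]
  · ring
  · exact div_nonpos_of_nonpos_of_nonneg
      (mul_nonpos_of_nonneg_of_nonpos (by linarith [hx.1]) (by linarith [hx.2])) (by linarith)

theorem sub_le_crossWeight_of_le (hab : a < b) (hx : x ≤ a) : a - x ≤ crossWeight a b x := by
  rw [crossWeight, abs_of_nonneg (div_nonneg (by nlinarith) (by linarith)),
    le_div_iff₀ (by linarith)]
  nlinarith

theorem sub_le_crossWeight_of_ge (hab : a < b) (hx : b ≤ x) : x - b ≤ crossWeight a b x := by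
  rw [crossWeight, abs_of_nonneg (div_nonneg (by nlinarith) (by linarith)),
    le_div_iff₀ (by linarith)]
  nlinarith

theorem exists_crossWeight_le_mul (hab : a < b) (hab' : a' < b') (hsep : b < a' ∨ b' < a) :
    ∃ Λ < 1, ∀ x ∈ Icc a b, crossWeight a b x ≤ Λ * crossWeight a' b' x := by
  rcases hsep with hsep | hsep
  · refine ⟨(b - a) / (a' - a), (div_lt_one (by linarith)).mpr (by linarith), fun x hx => ?_⟩
    rw [crossWeight_of_mem_Icc hab hx]
    have hw := sub_le_crossWeight_of_le hab' (hx.2.trans hsep.le)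
    calc (x - a) * (b - x) / (b - a) ≤ b - x := by
          rw [div_le_iff₀ (by linarith)]; nlinarith [hx.1, hx.2]
      _ ≤ (b - a) / (a' - a) * (a' - x) := by
          rw [div_mul_eq_mul_div, le_div_iff₀ (by linarith)]; nlinarith [hx.1]
      _ ≤ _ := mul_le_mul_of_nonneg_left hw (div_nonneg (by linarith) (by linarith))
  · refine ⟨(b - a) / (b - b'), (div_lt_one (by linarith)).mpr (by linarith), fun x hx => ?_⟩
    rw [crossWeight_of_mem_Icc hab hx]
    have hw := sub_le_crossWeight_of_ge hab' (hsep.le.trans hx.1)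
    calc (x - a) * (b - x) / (b - a) ≤ x - a := by
          rw [div_le_iff₀ (by linarith)]; nlinarith [hx.1, hx.2]
      _ ≤ (b - a) / (b - b') * (x - b') := by
          rw [div_mul_eq_mul_div, le_div_iff₀ (by linarith)]; nlinarith [hx.2]
      _ ≤ _ := mul_le_mul_of_nonneg_left hw (div_nonneg (by linarith) (by linarith))

end CrossWeight

theorem ConjClasses.mk_rep {G : Type*} [Monoid G] (c : ConjClasses G) :
    ConjClasses.mk c.rep = c :=
  (ConjClasses.exists_rep c).choose_spec

/-- `S.letter s` maps the complement of the interior of `I (letterSource s)` onto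
`I (letterTarget s)`; the letters `(i, true)` and `(i, false)` stand for `γᵢ` and `γᵢ⁻¹`. -/
def letterTarget {l : ℕ} (s : Fin l × Bool) : Fin l ⊕ Fin l := cond s.2 (.inr s.1) (.inl s.1)

def letterSource {l : ℕ} (s : Fin l × Bool) : Fin l ⊕ Fin l := cond s.2 (.inl s.1) (.inr s.1)

theorem letterTarget_ne_letterSource {l : ℕ} {s t : Fin l × Bool} (h : s.1 = t.1 → s.2 = t.2) :
    letterTarget t ≠ letterSource s := by
  obtain ⟨i, _ | _⟩ := s <;> obtain ⟨j, _ | _⟩ := t <;>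
    simp_all [letterTarget, letterSource, eq_comm]

namespace SchottkyData

open Set Filter Topology

section Generators

variable {l : ℕ} (S : SchottkyData l) (i : Fin l)

theorem mobiusOP_gen_mem {p : OnePoint ℝ}
    (hp : p ∉ ((↑) : ℝ → OnePoint ℝ) '' Ioo (S.a (.inl i)) (S.b (.inl i))) :
    mobiusOP (S.gen i) p ∈ ((↑) : ℝ → OnePoint ℝ) '' Icc (S.a (.inr i)) (S.b (.inr i)) :=
  S.maps_onto i ▸ mem_image_of_mem _ hp

theorem gen_apply_mem_Icc {x : ℝ} (hx : x ∉ Ioo (S.a (.inl i)) (S.b (.inl i))) :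
    mobiusDenom (S.gen i) x ≠ 0 ∧ mobiusR (S.gen i) x ∈ Icc (S.a (.inr i)) (S.b (.inr i)) := by
  have h := S.mobiusOP_gen_mem i (p := x) (by rwa [OnePoint.coe_injective.mem_set_image])
  rw [mobiusOP_coe] at h
  split_ifs at h with hd
  · exact absurd h (by simp)
  · exact ⟨hd, OnePoint.coe_injective.mem_set_image.mp h⟩

theorem gen_apply_infty :
    S.gen i 1 0 ≠ 0 ∧ S.gen i 0 0 / S.gen i 1 0 ∈ Icc (S.a (.inr i)) (S.b (.inr i)) := by
  have h := S.mobiusOP_gen_mem i (p := OnePoint.infty) (by simp)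
  rw [mobiusOP_infty] at h
  split_ifs at h with hc
  · exact absurd h (by simp)
  · exact ⟨hc, OnePoint.coe_injective.mem_set_image.mp h⟩

theorem gen_pole_mem_Ioo : -S.gen i 1 1 / S.gen i 1 0 ∈ Ioo (S.a (.inl i)) (S.b (.inl i)) := by
  by_contra h
  exact (S.gen_apply_mem_Icc i h).1 ((mobiusDenom_eq_zero_iff _ (S.gen_apply_infty i).1).mpr rfl)

theorem gen_apply_not_mem_Icc {y : ℝ} (hy : y ∈ Ioo (S.a (.inl i)) (S.b (.inl i)))
    (hd : mobiusDenom (S.gen i) y ≠ 0) :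
    mobiusR (S.gen i) y ∉ Icc (S.a (.inr i)) (S.b (.inr i)) := by
  intro hmem
  rw [← OnePoint.coe_injective.mem_set_image, ← S.maps_onto i] at hmem
  obtain ⟨p, hp, hpy⟩ := hmem
  induction p using OnePoint.rec with
  | infty =>
    rw [mobiusOP_infty, if_neg (S.gen_apply_infty i).1] at hpy
    exact mobiusR_ne_div _ (S.gen_apply_infty i).1 hd (OnePoint.coe_injective hpy).symm
  | coe z =>
    have hz : z ∉ Ioo (S.a (.inl i)) (S.b (.inl i)) := fun h => hp (mem_image_of_mem _ h)
    rw [mobiusOP_coe, if_neg (S.gen_apply_mem_Icc i hz).1] at hpy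
    exact hz (eq_of_mobiusR_eq _ (S.gen_apply_mem_Icc i hz).1 hd (OnePoint.coe_injective hpy) ▸ hy)

theorem a_lt_b_inl : S.a (.inl i) < S.b (.inl i) :=
  (S.gen_pole_mem_Ioo i).1.trans (S.gen_pole_mem_Ioo i).2

/-- Near the pole the generator leaves `I (inr i)`, so by continuity it can send an endpoint of
`I (inl i)` only to an endpoint of `I (inr i)`. -/
theorem gen_apply_mem_endpoints {e : ℝ} {t : Set ℝ} (he : e ∉ Ioo (S.a (.inl i)) (S.b (.inl i)))
    (ht : t ⊆ Ioo (S.a (.inl i)) (S.b (.inl i)) \ {-S.gen i 1 1 / S.gen i 1 0})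
    (het : e ∈ closure t) :
    mobiusR (S.gen i) e ∈ ({S.a (.inr i), S.b (.inr i)} : Set ℝ) := by
  obtain ⟨hd, hmem⟩ := S.gen_apply_mem_Icc i he
  have himage : mobiusR (S.gen i) '' t ⊆ (Icc (S.a (.inr i)) (S.b (.inr i)))ᶜ := by
    rintro _ ⟨y, hy, rfl⟩
    refine S.gen_apply_not_mem_Icc i (ht hy).1 fun h0 => (ht hy).2 ?_
    exact (mobiusDenom_eq_zero_iff _ (S.gen_apply_infty i).1).mp h0
  have hcl := closure_mono himage
    ((continuousAt_mobiusR _ hd).continuousWithinAt.mem_closure_image het)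
  rw [closure_compl, interior_Icc] at hcl
  rw [← Icc_sdiff_Ioo_same (hmem.1.trans hmem.2)]
  exact ⟨hmem, hcl⟩

theorem gen_endpoints :
    (mobiusR (S.gen i) (S.a (.inl i)) = S.a (.inr i) ∧
      mobiusR (S.gen i) (S.b (.inl i)) = S.b (.inr i)) ∨
    (mobiusR (S.gen i) (S.a (.inl i)) = S.b (.inr i) ∧
      mobiusR (S.gen i) (S.b (.inl i)) = S.a (.inr i)) := by
  obtain ⟨hAp, hpB⟩ := S.gen_pole_mem_Ioo i
  have hA := S.gen_apply_mem_endpoints i (e := S.a (.inl i))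
    (t := Ioo _ (-S.gen i 1 1 / S.gen i 1 0))
    (by simp) (fun y hy => ⟨⟨hy.1, hy.2.trans hpB⟩, hy.2.ne⟩)
    (by rw [closure_Ioo hAp.ne]; exact left_mem_Icc.mpr hAp.le)
  have hB := S.gen_apply_mem_endpoints i (e := S.b (.inl i))
    (t := Ioo (-S.gen i 1 1 / S.gen i 1 0) _)
    (by simp) (fun y hy => ⟨⟨hAp.trans hy.1, hy.2⟩, hy.1.ne'⟩)
    (by rw [closure_Ioo hpB.ne]; exact right_mem_Icc.mpr hpB.le)
  have hne : mobiusR (S.gen i) (S.a (.inl i)) ≠ mobiusR (S.gen i) (S.b (.inl i)) :=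
    fun h => (S.a_lt_b_inl i).ne (eq_of_mobiusR_eq _ (S.gen_apply_mem_Icc i (by simp)).1
      (S.gen_apply_mem_Icc i (by simp)).1 h)
  simp only [mem_insert_iff, mem_singleton_iff] at hA hB
  rcases hA with hA | hA <;> rcases hB with hB | hB <;> simp_all

theorem a_lt_b (j : Fin l ⊕ Fin l) : S.a j < S.b j := by
  rcases j with i | i
  · exact S.a_lt_b_inl i
  · refine (S.le (.inr i)).lt_of_ne fun h => (S.a_lt_b_inl i).ne ?_
    refine eq_of_mobiusR_eq _ (S.gen_apply_mem_Icc i (by simp)).1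
      (S.gen_apply_mem_Icc i (by simp)).1 ?_
    rcases S.gen_endpoints i with ⟨h1, h2⟩ | ⟨h1, h2⟩ <;> rw [h1, h2, h]

theorem gen_apply_mem_Ioo {x : ℝ} (hx : x ∉ Icc (S.a (.inl i)) (S.b (.inl i))) :
    mobiusDenom (S.gen i) x ≠ 0 ∧ mobiusR (S.gen i) x ∈ Ioo (S.a (.inr i)) (S.b (.inr i)) := by
  obtain ⟨hd, hmem⟩ := S.gen_apply_mem_Icc i (fun h => hx (Ioo_subset_Icc_self h))
  have hinj {e : ℝ} (he : e ∉ Ioo (S.a (.inl i)) (S.b (.inl i)))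
      (h : mobiusR (S.gen i) x = mobiusR (S.gen i) e) : x = e :=
    eq_of_mobiusR_eq _ hd (S.gen_apply_mem_Icc i he).1 h
  have hxA : mobiusR (S.gen i) x ≠ mobiusR (S.gen i) (S.a (.inl i)) := fun h =>
    hx (by rw [hinj (by simp) h]; exact left_mem_Icc.mpr (S.a_lt_b _).le)
  have hxB : mobiusR (S.gen i) x ≠ mobiusR (S.gen i) (S.b (.inl i)) := fun h =>
    hx (by rw [hinj (by simp) h]; exact right_mem_Icc.mpr (S.a_lt_b _).le)
  refine ⟨hd, ?_⟩
  rw [← Icc_sdiff_both]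
  refine ⟨hmem, ?_⟩
  rcases S.gen_endpoints i with ⟨h1, h2⟩ | ⟨h1, h2⟩ <;> rw [← h1, ← h2] <;> simp [hxA, hxB]

theorem gen_inv_apply_mem_Ioo {x : ℝ} (hx : x ∉ Icc (S.a (.inr i)) (S.b (.inr i))) :
    mobiusDenom (S.gen i)⁻¹ x ≠ 0 ∧
      mobiusR (S.gen i)⁻¹ x ∈ Ioo (S.a (.inl i)) (S.b (.inl i)) := by
  have hd : mobiusDenom (S.gen i)⁻¹ x ≠ 0 := by
    obtain ⟨hc, hmem⟩ := S.gen_apply_infty i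
    rw [mobiusDenom_inv]
    intro h0
    exact hx (by rwa [show x = S.gen i 0 0 / S.gen i 1 0 by field_simp; linarith])
  have hgy := mobiusR_inv_mobiusR _ hd
  rw [inv_inv] at hgy
  refine ⟨hd, by_contra fun hy => hx ?_⟩
  rw [← hgy]
  exact (S.gen_apply_mem_Icc i hy).2

end Generators

section PingPong

variable {l : ℕ} (S : SchottkyData l)

def letter (s : Fin l × Bool) : SL2R := cond s.2 (S.gen s.1) (S.gen s.1)⁻¹

noncomputable def weight (j : Fin l ⊕ Fin l) (x : ℝ) : ℝ := crossWeight (S.a j) (S.b j) x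

theorem weight_inr_eq_crossWeight (i : Fin l) (y : ℝ) : S.weight (.inr i) y =
    crossWeight (mobiusR (S.gen i) (S.a (.inl i))) (mobiusR (S.gen i) (S.b (.inl i))) y := by
  rcases S.gen_endpoints i with ⟨h1, h2⟩ | ⟨h1, h2⟩ <;>
    simp only [weight, h1, h2, crossWeight_comm]

theorem weight_letter_apply (s : Fin l × Bool) {x : ℝ} (hx : mobiusDenom (S.letter s) x ≠ 0) :
    S.weight (letterTarget s) (mobiusR (S.letter s) x) * mobiusDenom (S.letter s) x ^ 2
      = S.weight (letterSource s) x := by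
  obtain ⟨i, _ | _⟩ := s <;> simp only [letter, letterTarget, letterSource, cond_false,
    cond_true] at hx ⊢ <;> rw [S.weight_inr_eq_crossWeight, weight]
  all_goals
    have hA := (S.gen_apply_mem_Icc i (x := S.a (.inl i)) (by simp)).1
    have hB := (S.gen_apply_mem_Icc i (x := S.b (.inl i)) (by simp)).1
  · rw [← crossWeight_mobiusR _ (mobiusDenom_inv_mobiusR_ne_zero _ hA)
      (mobiusDenom_inv_mobiusR_ne_zero _ hB) hx, mobiusR_inv_mobiusR _ hA, mobiusR_inv_mobiusR _ hB]
  · rw [crossWeight_mobiusR _ hA hB hx]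

theorem letter_apply_mem_Ioo (s : Fin l × Bool) {x : ℝ}
    (hx : x ∉ Icc (S.a (letterSource s)) (S.b (letterSource s))) :
    mobiusDenom (S.letter s) x ≠ 0 ∧
      mobiusR (S.letter s) x ∈ Ioo (S.a (letterTarget s)) (S.b (letterTarget s)) := by
  obtain ⟨i, _ | _⟩ := s
  exacts [S.gen_inv_apply_mem_Ioo i hx, S.gen_apply_mem_Ioo i hx]

theorem b_lt_a_or_b_lt_a {j k : Fin l ⊕ Fin l} (hjk : j ≠ k) : S.b j < S.a k ∨ S.b k < S.a j := by
  by_contra! h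
  have hj : max (S.a j) (S.a k) ∈ Icc (S.a j) (S.b j) := ⟨le_max_left _ _, max_le (S.le j) h.1⟩
  have hk : max (S.a j) (S.a k) ∈ Icc (S.a k) (S.b k) := ⟨le_max_right _ _, max_le h.2 (S.le k)⟩
  exact disjoint_left.mp (S.disjoint hjk) hj hk

def WeightContracting (Λ : ℝ) : Prop :=
  ∀ j k, j ≠ k → ∀ x ∈ Icc (S.a j) (S.b j), S.weight j x ≤ Λ * S.weight k x

theorem exists_weightContracting : ∃ Λ, 0 < Λ ∧ Λ < 1 ∧ S.WeightContracting Λ := by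
  have hpair (p : (Fin l ⊕ Fin l) × (Fin l ⊕ Fin l)) : ∀ᶠ Λ in 𝓝[<] (1 : ℝ), p.1 ≠ p.2 →
      ∀ x ∈ Icc (S.a p.1) (S.b p.1), S.weight p.1 x ≤ Λ * S.weight p.2 x := by
    by_cases hp : p.1 = p.2
    · exact Eventually.of_forall fun _ h => absurd hp h
    obtain ⟨Λ₀, hΛ₀, h⟩ := exists_crossWeight_le_mul (S.a_lt_b p.1) (S.a_lt_b p.2)
      (S.b_lt_a_or_b_lt_a hp)
    filter_upwards [Ioo_mem_nhdsLT hΛ₀] with Λ hΛ _ x hx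
    exact (h x hx).trans (mul_le_mul_of_nonneg_right hΛ.1.le (abs_nonneg _))
  obtain ⟨Λ, hΛ, hpos⟩ := ((eventually_all.mpr hpair).and (Ioo_mem_nhdsLT one_pos)).exists
  exact ⟨Λ, hpos.1, hpos.2, fun j k hjk => hΛ (j, k) hjk⟩

variable {S} {Λ : ℝ}

theorem WeightContracting.letter_step (hΛ : S.WeightContracting Λ) (s : Fin l × Bool)
    {j : Fin l ⊕ Fin l} (hj : j ≠ letterSource s) {x : ℝ} (hx : x ∈ Icc (S.a j) (S.b j)) :
    mobiusDenom (S.letter s) x ≠ 0 ∧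
      mobiusR (S.letter s) x ∈ Ioo (S.a (letterTarget s)) (S.b (letterTarget s)) ∧
      S.weight j x ≤ Λ * (S.weight (letterTarget s) (mobiusR (S.letter s) x) *
        mobiusDenom (S.letter s) x ^ 2) := by
  obtain ⟨hd, hmem⟩ := S.letter_apply_mem_Ioo s fun h => disjoint_left.mp (S.disjoint hj) hx h
  exact ⟨hd, hmem, S.weight_letter_apply s hd ▸ hΛ j _ hj x hx⟩

variable (S) in
def wordElt (L : List (Fin l × Bool)) : SL2R := (L.map S.letter).prod

theorem wordElt_cons (s : Fin l × Bool) (L : List (Fin l × Bool)) :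
    S.wordElt (s :: L) = S.letter s * S.wordElt L := List.prod_cons

theorem WeightContracting.pingpong (hΛ : S.WeightContracting Λ) (hΛ0 : 0 ≤ Λ)
    (s : Fin l × Bool) (L : List (Fin l × Bool)) (hL : FreeGroup.IsReduced (s :: L))
    {j : Fin l ⊕ Fin l} (hj : j ≠ letterSource ((s :: L).getLast (List.cons_ne_nil s L)))
    {x : ℝ} (hx : x ∈ Icc (S.a j) (S.b j)) :
    mobiusDenom (S.wordElt (s :: L)) x ≠ 0 ∧
      mobiusR (S.wordElt (s :: L)) x ∈ Ioo (S.a (letterTarget s)) (S.b (letterTarget s)) ∧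
      S.weight j x ≤ Λ ^ (L.length + 1) * (S.weight (letterTarget s)
        (mobiusR (S.wordElt (s :: L)) x) * mobiusDenom (S.wordElt (s :: L)) x ^ 2) := by
  induction L generalizing s with
  | nil => simpa [wordElt] using hΛ.letter_step s hj hx
  | cons t L ih =>
    obtain ⟨hst, htL⟩ := List.isChain_cons_cons.mp hL
    obtain ⟨hd, hmem, hw⟩ := ih t htL (by rwa [List.getLast_cons_cons] at hj)
    obtain ⟨hd', hmem', hw'⟩ :=
      hΛ.letter_step s (letterTarget_ne_letterSource hst) (Ioo_subset_Icc_self hmem)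
    rw [wordElt_cons, mobiusDenom_mul _ _ hd, mobiusR_mul _ _ hd]
    refine ⟨mul_ne_zero hd hd', hmem', hw.trans ?_⟩
    calc Λ ^ (L.length + 1) * (S.weight (letterTarget t) (mobiusR (S.wordElt (t :: L)) x) *
          mobiusDenom (S.wordElt (t :: L)) x ^ 2)
        ≤ Λ ^ (L.length + 1) * (Λ * (S.weight (letterTarget s)
            (mobiusR (S.letter s) (mobiusR (S.wordElt (t :: L)) x)) *
            mobiusDenom (S.letter s) (mobiusR (S.wordElt (t :: L)) x) ^ 2) *
          mobiusDenom (S.wordElt (t :: L)) x ^ 2) := by gcongr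
      _ = _ := by simp only [List.length_cons]; ring

/-- The word maps the interval of its first letter into its own interior, hence has a fixed point
there, at which `pingpong` bounds the multiplier `(mobiusDenom _ p) ^ (-2)` by `Λ ^ length`. -/
theorem WeightContracting.exists_fixedPoint (hΛ : S.WeightContracting Λ) (hΛ0 : 0 ≤ Λ)
    {L : List (Fin l × Bool)} (hL : FreeGroup.IsCyclicallyReduced L) (hne : L ≠ []) :
    ∃ p, mobiusDenom (S.wordElt L) p ≠ 0 ∧ mobiusR (S.wordElt L) p = p ∧
      1 ≤ Λ ^ L.length * mobiusDenom (S.wordElt L) p ^ 2 := by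
  obtain ⟨s, L, rfl⟩ := List.exists_cons_of_ne_nil hne
  have hk : letterTarget s ≠ letterSource ((s :: L).getLast hne) :=
    letterTarget_ne_letterSource (hL.2 _ (List.getLast?_eq_some_getLast hne) s rfl)
  have hpp {x} (hx : x ∈ Icc (S.a (letterTarget s)) (S.b (letterTarget s))) :=
    hΛ.pingpong hΛ0 s L hL.1 hk hx
  set g := S.wordElt (s :: L)
  set k := letterTarget s
  have hab := (S.a_lt_b k).le
  obtain ⟨p, hp, hfix⟩ : ∃ p ∈ Icc (S.a k) (S.b k), mobiusR g p - p = 0 := by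
    refine intermediate_value_Icc' (f := fun x => mobiusR g x - x) hab (fun x hx =>
      ((continuousAt_mobiusR g (hpp hx).1).sub continuousAt_id).continuousWithinAt) ⟨?_, ?_⟩
    · linarith [(hpp (right_mem_Icc.mpr hab)).2.1.2]
    · linarith [(hpp (left_mem_Icc.mpr hab)).2.1.1]
  rw [sub_eq_zero] at hfix
  obtain ⟨hd, hmem, hw⟩ := hpp hp
  rw [hfix] at hmem hw
  have := crossWeight_pos hmem
  unfold weight at hw
  exact ⟨p, hd, hfix, by rw [List.length_cons]; nlinarith⟩

theorem WeightContracting.le_transLength (hΛ : S.WeightContracting Λ) (hΛ0 : 0 < Λ)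
    (hΛ1 : Λ ≤ 1) {L : List (Fin l × Bool)} (hL : FreeGroup.IsCyclicallyReduced L)
    (hne : L ≠ []) : L.length * Real.log Λ⁻¹ ≤ transLength (S.wordElt L) := by
  obtain ⟨p, hd, hfix, hmul⟩ := hΛ.exists_fixedPoint hΛ0.le hL hne
  have hΛn : 0 < Λ ^ L.length := pow_pos hΛ0 _
  have hsq : (Λ ^ L.length)⁻¹ ≤ mobiusDenom (S.wordElt L) p ^ 2 := by
    rwa [inv_le_iff_one_le_mul₀' hΛn]
  rw [transLength_eq_log_sq hd hfix ((one_le_inv₀ hΛn).mpr (pow_le_one₀ hΛ0.le hΛ1) |>.trans hsq)]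
  calc (L.length : ℝ) * Real.log Λ⁻¹ = Real.log (Λ ^ L.length)⁻¹ := by
        rw [Real.log_inv, Real.log_inv, Real.log_pow]; ring
    _ ≤ _ := Real.log_le_log (inv_pos.mpr hΛn) hsq

end PingPong

section Coding

variable {l : ℕ} (S : SchottkyData l)

def toGroup : FreeGroup (Fin l) →* S.group :=
  FreeGroup.lift fun i => ⟨S.gen i, Subgroup.subset_closure ⟨i, rfl⟩⟩

theorem coe_toGroup_mk (L : List (Fin l × Bool)) :
    (S.toGroup (FreeGroup.mk L) : SL2R) = S.wordElt L := by
  rw [toGroup, FreeGroup.lift_mk, Subgroup.val_list_prod, List.map_map, wordElt]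
  congr 1
  refine List.map_congr_left fun s _ => ?_
  obtain ⟨i, _ | _⟩ := s <;> rfl

theorem toGroup_surjective : Function.Surjective S.toGroup := by
  rintro ⟨γ, hγ⟩
  rw [group, ← FreeGroup.range_lift_eq_closure] at hγ
  obtain ⟨x, rfl⟩ := hγ
  refine ⟨x, Subtype.ext ?_⟩
  change (S.toGroup x : SL2R) = FreeGroup.lift S.gen x
  rw [← FreeGroup.mk_toWord (x := x), coe_toGroup_mk, FreeGroup.lift_mk]
  rfl

theorem exists_isCyclicallyReduced_isConj {γ : S.group} (hγ : γ ≠ 1) :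
    ∃ L : List (Fin l × Bool), L ≠ [] ∧ FreeGroup.IsCyclicallyReduced L ∧
      IsConj (S.toGroup (FreeGroup.mk L)) γ := by
  obtain ⟨x, rfl⟩ := S.toGroup_surjective γ
  set C := FreeGroup.reduceCyclically.conjugator x.toWord
  have hx : x = FreeGroup.mk C * FreeGroup.mk (FreeGroup.reduceCyclically x.toWord) *
      (FreeGroup.mk C)⁻¹ := by
    rw [FreeGroup.inv_mk, FreeGroup.mul_mk, FreeGroup.mul_mk,
      FreeGroup.reduceCyclically.conj_conjugator_reduceCyclically, FreeGroup.mk_toWord]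
  refine ⟨FreeGroup.reduceCyclically x.toWord, fun h => hγ ?_,
    FreeGroup.reduceCyclically.isCyclicallyReduced FreeGroup.isReduced_toWord,
    isConj_iff.mpr ⟨S.toGroup (FreeGroup.mk C), by rw [← map_mul, ← map_inv, ← map_mul, ← hx]⟩⟩
  rw [h, ← FreeGroup.one_eq_mk, mul_one, mul_inv_cancel] at hx
  rw [hx, map_one]

theorem exists_injective_words : ∃ m > 0, ∃ W : S.PrimClasses → List (Fin l × Bool),
    Function.Injective W ∧
      ∀ c, W c ≠ [] ∧ (W c).length * m ≤ transLength ((c.1.rep : S.group) : SL2R) := by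
  obtain ⟨Λ, hΛ0, hΛ1, hΛ⟩ := S.exists_weightContracting
  have hword (c : S.PrimClasses) : ∃ L : List (Fin l × Bool), L ≠ [] ∧
      ConjClasses.mk (S.toGroup (FreeGroup.mk L)) = c.1 ∧
      L.length * Real.log Λ⁻¹ ≤ transLength ((c.1.rep : S.group) : SL2R) := by
    obtain ⟨L, hne, hcyc, hconj⟩ := S.exists_isCyclicallyReduced_isConj c.2.1
    refine ⟨L, hne, (ConjClasses.mk_eq_mk_iff_isConj.mpr hconj).trans c.1.mk_rep, ?_⟩
    have hlen := transLength_eq_of_isConj (S.group.subtype.map_isConj hconj)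
    rw [Subgroup.subtype_apply, Subgroup.subtype_apply, coe_toGroup_mk] at hlen
    rw [hlen]
    exact hΛ.le_transLength hΛ0 hΛ1.le hcyc hne
  choose W hne hmk hlen using hword
  exact ⟨Real.log Λ⁻¹, Real.log_pos ((one_lt_inv₀ hΛ0).mpr hΛ1), W,
    fun c c' h => Subtype.ext (by rw [← hmk c, ← hmk c', h]), fun c => ⟨hne c, hlen c⟩⟩

end Coding

end SchottkyData

section Series

open Filter Topology

theorem summable_pow_length {α : Type*} [Fintype α] {q : ℝ} (h0 : 0 ≤ q)
    (h1 : Fintype.card α * q < 1) : Summable fun w : List α => q ^ w.length := by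
  have hlen : (fun w : List α => q ^ w.length) ∘ List.equivSigmaTuple.symm = fun x => q ^ x.1 := by
    funext ⟨n, v⟩
    simp [List.equivSigmaTuple]
  rw [← List.equivSigmaTuple.symm.summable_iff, hlen,
    summable_sigma_of_nonneg fun _ => pow_nonneg h0 _]
  refine ⟨fun _ => .of_finite, (summable_geometric_of_lt_one (by positivity) h1).congr fun n => ?_⟩
  dsimp only
  rw [eq_comm, tsum_const, Nat.card_eq_fintype_card, Fintype.card_fun, Fintype.card_fin,
    nsmul_eq_mul, mul_pow, Nat.cast_pow]

theorem le_of_length_mul_le {α : Type*} {w : List α} {m t : ℝ} (hm : 0 ≤ m) (hw : w ≠ [])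
    (h : w.length * m ≤ t) : m ≤ t :=
  (le_mul_of_one_le_left hm (by exact_mod_cast List.length_pos_iff.mpr hw)).trans h

variable {ι α : Type*} [Fintype α] {W : ι → List α} {ℓ : ι → ℝ} {m : ℝ}

/-- There are `(card α) ^ n` words of length `n`, so the series converges once
`card α * e^{-σ₁ m} < 1`. -/
theorem exists_summable_exp_neg_mul (hW : Function.Injective W) (hm : 0 < m)
    (hℓ : ∀ c, W c ≠ [] ∧ (W c).length * m ≤ ℓ c) :
    ∃ σ₁, Summable fun p : ι × ℕ => Real.exp (-(σ₁ + p.2) * ℓ p.1) := by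
  set K : ℝ := (Fintype.card α : ℝ)
  have hq : K * Real.exp (-(K + 1)) < 1 := by
    rw [Real.exp_neg, mul_inv_lt_iff₀ (Real.exp_pos _), one_mul]
    linarith [Real.add_one_le_exp (K + 1)]
  have hr : Real.exp (-m) < 1 := Real.exp_lt_one_iff.mpr (by linarith)
  refine ⟨(K + 1) / m, Summable.of_nonneg_of_le (fun _ => (Real.exp_pos _).le) (fun p => ?_)
    (((summable_pow_length (Real.exp_pos _).le hq).comp_injective hW).mul_of_nonneg
      (summable_geometric_of_lt_one (Real.exp_pos _).le hr)
      (fun _ => pow_nonneg (Real.exp_pos _).le _) (fun _ => pow_nonneg (Real.exp_pos _).le _))⟩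
  have hK : 0 ≤ (K + 1) / m := by positivity
  have h1 := mul_le_mul_of_nonneg_left (hℓ p.1).2 hK
  have h2 := mul_le_mul_of_nonneg_left (le_of_length_mul_le hm.le (hℓ p.1).1 (hℓ p.1).2)
    (Nat.cast_nonneg (α := ℝ) p.2)
  simp only [Function.comp, ← Real.exp_nat_mul, ← Real.exp_add]
  refine Real.exp_le_exp.mpr ?_
  field_simp at h1 ⊢
  nlinarith

theorem eventually_tsum_exp_neg_mul_le {σ₁ : ℝ} (hm : 0 < m) (hℓ : ∀ c, m ≤ ℓ c)
    (hσ₁ : Summable fun p : ι × ℕ => Real.exp (-(σ₁ + p.2) * ℓ p.1)) {ε : ℝ} (hε : 0 < ε) :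
    ∀ᶠ σ in atTop, (Summable fun p : ι × ℕ => Real.exp (-(σ + p.2) * ℓ p.1)) ∧
      ∑' p : ι × ℕ, Real.exp (-(σ + p.2) * ℓ p.1) ≤ ε := by
  have hdecay : Tendsto (fun σ => Real.exp (-((σ - σ₁) * m)) * ∑' p : ι × ℕ,
      Real.exp (-(σ₁ + p.2) * ℓ p.1)) atTop (𝓝 0) := by
    simpa [sub_eq_add_neg] using (Real.tendsto_exp_neg_atTop_nhds_zero.comp
      ((tendsto_atTop_add_const_right atTop (-σ₁) tendsto_id).atTop_mul_const hm)).mul_const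
      (∑' p : ι × ℕ, Real.exp (-(σ₁ + p.2) * ℓ p.1))
  filter_upwards [eventually_ge_atTop σ₁, hdecay.eventually_le_const hε] with σ hσ hsmall
  have hle (p : ι × ℕ) : Real.exp (-(σ + p.2) * ℓ p.1) ≤
      Real.exp (-((σ - σ₁) * m)) * Real.exp (-(σ₁ + p.2) * ℓ p.1) := by
    rw [← Real.exp_add, Real.exp_le_exp]
    nlinarith [hℓ p.1]
  have hsum := Summable.of_nonneg_of_le (fun _ => (Real.exp_pos _).le) hle (hσ₁.mul_left _)
  refine ⟨hsum, (Summable.tsum_le_tsum hle hsum (hσ₁.mul_left _)).trans ?_⟩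
  rwa [tsum_mul_left]

end Series

section Products

variable {ι κ : Type*}

theorem Complex.norm_log_one_sub_le {z : ℂ} (hz : ‖z‖ ≤ 1 / 2) :
    ‖Complex.log (1 - z)‖ ≤ 3 / 2 * ‖z‖ := by
  simpa [sub_eq_add_neg] using Complex.norm_log_one_add_half_le_self (z := -z) (by simpa using hz)

theorem hasProd_one_sub_of_norm_le {f : ι → ℂ} (hf : Summable (‖f ·‖)) (h : ∀ i, ‖f i‖ ≤ 1 / 2) :
    HasProd (fun i => 1 - f i) (Complex.exp (∑' i, Complex.log (1 - f i))) ∧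
      ‖∑' i, Complex.log (1 - f i)‖ ≤ 3 / 2 * ∑' i, ‖f i‖ := by
  have hlog (i : ι) := Complex.norm_log_one_sub_le (h i)
  have hsum := Summable.of_nonneg_of_le (fun _ => norm_nonneg _) hlog (hf.mul_left _)
  refine ⟨Complex.hasProd_of_hasSum_log (fun i => sub_ne_zero.mpr fun h1 => ?_)
    (hsum.of_norm.hasSum), ?_⟩
  · have := h i
    rw [← h1, norm_one] at this
    norm_num at this
  · rw [← tsum_mul_left]
    exact (norm_tsum_le_tsum_norm hsum).trans (hsum.tsum_le_tsum hlog (hf.mul_left _))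

/-- The logarithm of the product has norm at most `3/2 * 1/4`, as `|log (1 - z)| ≤ 3/2 |z|`
for `|z| ≤ 1/2`. -/
theorem multipliable_one_sub_and_half_lt_norm_tprod {u : ι × κ → ℂ} (hu : Summable (‖u ·‖))
    (hsmall : ∑' p, ‖u p‖ ≤ 1 / 4) :
    Multipliable (fun p => 1 - u p) ∧ (∀ i, Multipliable fun k => 1 - u (i, k)) ∧
      Multipliable (fun i => ∏' k, (1 - u (i, k))) ∧ 1 / 2 < ‖∏' i, ∏' k, (1 - u (i, k))‖ := by
  have hle (p : ι × κ) : ‖u p‖ ≤ 1 / 2 :=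
    (hu.le_tsum p fun _ _ => norm_nonneg _).trans (by linarith)
  have hrow (i : ι) := hasProd_one_sub_of_norm_le (hu.prod_factor i) fun k => hle (i, k)
  have hrows : Summable fun i => 3 / 2 * ∑' k, ‖u (i, k)‖ :=
    ((summable_prod_of_nonneg fun _ => norm_nonneg _).mp hu).2.mul_left _
  have hL := Summable.of_nonneg_of_le (fun _ => norm_nonneg _) (fun i => (hrow i).2) hrows
  have hprod : HasProd (fun i => ∏' k, (1 - u (i, k)))
      (Complex.exp (∑' i, ∑' k, Complex.log (1 - u (i, k)))) := by
    simp_rw [fun i => (hrow i).1.tprod_eq]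
    exact hL.of_norm.hasSum.cexp
  refine ⟨(hasProd_one_sub_of_norm_le hu hle).1.multipliable, fun i => (hrow i).1.multipliable,
    hprod.multipliable, ?_⟩
  have hnorm : ‖∑' i, ∑' k, Complex.log (1 - u (i, k))‖ ≤ 3 / 8 := by
    calc _ ≤ ∑' i, 3 / 2 * ∑' k, ‖u (i, k)‖ :=
          (norm_tsum_le_tsum_norm hL).trans (hL.tsum_le_tsum (fun i => (hrow i).2) hrows)
      _ = 3 / 2 * ∑' p, ‖u p‖ := by
          rw [tsum_mul_left, hu.tsum_prod' fun i => hu.prod_factor i]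
      _ ≤ 3 / 8 := by linarith
  rw [hprod.tprod_eq, Complex.norm_exp]
  calc (1 / 2 : ℝ) < -(3 / 8) + 1 := by norm_num
    _ ≤ Real.exp (-(3 / 8)) := Real.add_one_le_exp _
    _ ≤ _ := Real.exp_le_exp.mpr (by
        linarith [neg_abs_le (∑' i, ∑' k, Complex.log (1 - u (i, k))).re,
          Complex.abs_re_le_norm (∑' i, ∑' k, Complex.log (1 - u (i, k)))])

end Products

theorem Complex.norm_exp_neg_add_mul_ofReal (s : ℂ) (k : ℕ) (t : ℝ) :
    ‖Complex.exp (-(s + k) * t)‖ = Real.exp (-(s.re + k) * t) := by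
  rw [Complex.norm_exp]
  simp

/-- There is `s₀ > 0` such that for every `s` with `Re s > s₀` the
double family `(e^{-(s+k) ℓ(γ)})` indexed by primitive conjugacy classes `{γ}` and `k ∈ ℕ`
is (absolutely) summable, the double product `Z_Γ(s) = ∏_{{γ}} ∏_k (1 - e^{-(s+k) ℓ(γ)})`
converges, and `|Z_Γ(s)| > 1/2`. -/
theorem schottky_zeta_large_re {l : ℕ} (S : SchottkyData l) :
    ∃ s₀ : ℝ, 0 < s₀ ∧ ∀ s : ℂ, s₀ < s.re →
      Summable (fun ck : S.PrimClasses × ℕ =>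
        ‖Complex.exp (-(s + (ck.2 : ℂ)) *
          (transLength ((ck.1.1.rep : S.group) : SL2R) : ℂ))‖) ∧
      Multipliable (fun ck : S.PrimClasses × ℕ => S.zetaFactor s ck.1 ck.2) ∧
      (∀ c : S.PrimClasses, Multipliable fun k : ℕ => S.zetaFactor s c k) ∧
      Multipliable (fun c : S.PrimClasses => ∏' k : ℕ, S.zetaFactor s c k) ∧
      1 / 2 < ‖S.selbergZeta s‖ := by
  obtain ⟨m, hm, W, hW, hlen⟩ := S.exists_injective_words
  obtain ⟨σ₁, hσ₁⟩ := exists_summable_exp_neg_mul hW hm hlen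
  obtain ⟨s₀, hs₀⟩ := Filter.eventually_atTop.mp <| eventually_tsum_exp_neg_mul_le hm
    (fun c => le_of_length_mul_le hm.le (hlen c).1 (hlen c).2) hσ₁ (ε := 1 / 4) (by norm_num)
  refine ⟨max s₀ 1, by positivity, fun s hs => ?_⟩
  obtain ⟨hsum, hsmall⟩ := hs₀ s.re ((le_max_left _ _).trans hs.le)
  simp only [Complex.norm_exp_neg_add_mul_ofReal]
  exact ⟨hsum, multipliable_one_sub_and_half_lt_norm_tprod (by simpa only
    [Complex.norm_exp_neg_add_mul_ofReal] using hsum) (by simpa only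
    [Complex.norm_exp_neg_add_mul_ofReal] using hsmall)⟩
end
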